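/- arXiv:2409.01770 — 2 statements merged into one kernel-verified Lean document; each statement's English description precedes it below -/
import Mathlib

section
/- Let 𝔠 = {C_1,…,C_ℓ} be a partition of [p] with ℓ ≥ 2. For every Z ∈ St(n,p): B_Z ∘ A_Z = A_Z ∘ B_Z = identity on ℝ^{n×p}, i.e., B_Z is the inverse of the averaging operator A_Z. Moreover, for all X, Y ∈ St(n,p) and every ξ ∈ ℝ^{n×p}: B_Y(ξ) − B_X(ξ) = (ℓ(ℓ−2)/2)·( Y·[(J−I) ⊡ (Yᵀξ)] − X·[(J−I) ⊡ (Xᵀξ)] ), where J ∈ ℝ^{ℓ×ℓ} is the all-ones matrix. -/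
/-!
Common definitions for the formalization of results from
"Nonsmooth Optimization over the Stiefel Manifold via a Randomized
Submanifold Subgradient Method" (RSSM).
-/

open Matrix Finset

noncomputable section

namespace RSSM

variable {n p ℓ : ℕ}

/-- Real `n × p` matrices. -/
abbrev Mat (n p : ℕ) := Matrix (Fin n) (Fin p) ℝ

/-- Frobenius inner product `⟨ξ,η⟩ = tr(ξᵀ η)`. -/
def fip (ξ η : Mat n p) : ℝ := (ξᵀ * η).trace

/-- Frobenius norm. -/
def fnorm (ξ : Mat n p) : ℝ := Real.sqrt (fip ξ ξ)

/-- The Stiefel manifold `St(n,p)`. -/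
def Stiefel (n p : ℕ) : Set (Mat n p) := {X | Xᵀ * X = 1}

/-- Column-selection matrix `I_C`. -/
def sel (C : Finset (Fin p)) : Matrix (Fin p) (Fin C.card) ℝ :=
  Matrix.of fun s t => if s = C.orderEmbOfFin rfl t then (1 : ℝ) else 0

/-- Skew-symmetric part. -/
def skewPart {m : ℕ} (A : Matrix (Fin m) (Fin m) ℝ) : Matrix (Fin m) (Fin m) ℝ :=
  (1 / 2 : ℝ) • (A - Aᵀ)

/-- Symmetric part. -/
def symPart {m : ℕ} (A : Matrix (Fin m) (Fin m) ℝ) : Matrix (Fin m) (Fin m) ℝ :=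
  (1 / 2 : ℝ) • (A + Aᵀ)

open Classical in
/-- Inverse of the positive-semidefinite square root (junk value `0` otherwise). -/
def invSqrt {m : ℕ} (S : Matrix (Fin m) (Fin m) ℝ) : Matrix (Fin m) (Fin m) ℝ :=
  if h : S.PosSemidef then
    (h.1.eigenvectorUnitary.1 * diagonal ((↑) ∘ (√·) ∘ h.1.eigenvalues) *
      (star h.1.eigenvectorUnitary : Matrix (Fin m) (Fin m) ℝ))⁻¹ else 0

/-- Orthogonal projection onto the tangent space `T_X St(n,p)`. -/
def ptan (X ξ : Mat n p) : Mat n p := ξ - X * symPart (Xᵀ * ξ)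

/-- Orthogonal projection `Π` onto the tangent space of the submanifold block at `X_D`. -/
def pblk (X : Mat n p) (D : Finset (Fin p)) (η : Matrix (Fin n) (Fin D.card) ℝ) :
    Matrix (Fin n) (Fin D.card) ℝ :=
  (X * sel D) * skewPart ((X * sel D)ᵀ * η) + (1 - X * Xᵀ) * η

/-- The averaging operator `A_X` (written as an average over ordered pairs of
distinct indices, which equals the average over unordered pairs since each
unordered pair is counted twice). -/
def avg (C : Fin ℓ → Finset (Fin p)) (X ξ : Mat n p) : Mat n p :=
  ((ℓ : ℝ) * ((ℓ : ℝ) - 1))⁻¹ •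
    ∑ q ∈ Finset.univ.offDiag,
      ((1 : Matrix (Fin n) (Fin n) ℝ)
          - (X * sel ((C q.1 ∪ C q.2)ᶜ)) * (X * sel ((C q.1 ∪ C q.2)ᶜ))ᵀ)
        * (ξ * sel (C q.1 ∪ C q.2)) * (sel (C q.1 ∪ C q.2))ᵀ

/-- The averaging operator `A_X` as a linear endomorphism. -/
def avgL (C : Fin ℓ → Finset (Fin p)) (X : Mat n p) : Mat n p →ₗ[ℝ] Mat n p where
  toFun := avg C X
  map_add' := by
    intro ξ η
    simp [avg, Matrix.add_mul, Matrix.mul_add, Finset.sum_add_distrib, smul_add]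
  map_smul' := by
    intro c ξ
    simp only [avg, RingHom.id_apply, Matrix.smul_mul, Matrix.mul_smul, ← Finset.smul_sum]
    rw [smul_comm]

/-- `C(ℓ,2) = ℓ(ℓ-1)/2`. -/
def choose2 (ℓ : ℕ) : ℝ := (ℓ : ℝ) * ((ℓ : ℝ) - 1) / 2

/-- Block Hadamard product `A ⊡ M` with respect to the partition `C`. -/
def bhad (C : Fin ℓ → Finset (Fin p)) (A : Matrix (Fin ℓ) (Fin ℓ) ℝ)
    (M : Matrix (Fin p) (Fin p) ℝ) : Matrix (Fin p) (Fin p) ℝ :=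
  Matrix.of fun s t => (∑ i, ∑ j, if s ∈ C i ∧ t ∈ C j then A i j else 0) * M s t

/-- `Q' = J - ((ℓ-2)/(ℓ-1)) I`. -/
def Qmat (ℓ : ℕ) : Matrix (Fin ℓ) (Fin ℓ) ℝ :=
  Matrix.of fun i j => 1 - (if i = j then ((ℓ : ℝ) - 2) / ((ℓ : ℝ) - 1) else 0)

/-- The all-ones `ℓ × ℓ` matrix `J`. -/
def Jmat (ℓ : ℕ) : Matrix (Fin ℓ) (Fin ℓ) ℝ := Matrix.of fun _ _ => 1

/-- The operator `B_Z` (the inverse of the averaging operator `A_Z`). -/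
def Bop (C : Fin ℓ → Finset (Fin p)) (Z ξ : Mat n p) : Mat n p :=
  Z * (choose2 ℓ • bhad C (Qmat ℓ) (Zᵀ * ξ)) + ((ℓ : ℝ) / 2) • ((1 - Z * Zᵀ) * ξ)

/-- `‖ξ‖²_{A_Z^{-1}} = ⟨B_Z(ξ), ξ⟩`. -/
def anorm2 (C : Fin ℓ → Finset (Fin p)) (Z ξ : Mat n p) : ℝ := fip (Bop C Z ξ) ξ

/-- The RSSM update `U(X, v, γ, {i,j})`: it agrees with `X` on all columns outside
`C_i ∪ C_j` and performs a retracted partial Riemannian subgradient step there. -/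
def update (C : Fin ℓ → Finset (Fin p)) (X v : Mat n p) (γ : ℝ) (i j : Fin ℓ) : Mat n p :=
  X - (X * sel (C i ∪ C j)) * (sel (C i ∪ C j))ᵀ
    + ((X * sel (C i ∪ C j) - γ • pblk X (C i ∪ C j) (v * sel (C i ∪ C j)))
        * invSqrt ((X * sel (C i ∪ C j) - γ • pblk X (C i ∪ C j) (v * sel (C i ∪ C j)))ᵀ
            * (X * sel (C i ∪ C j) - γ • pblk X (C i ∪ C j) (v * sel (C i ∪ C j)))))
      * (sel (C i ∪ C j))ᵀ

/-- The subdifferential of a `τ`-weakly convex function relative to `Ω`. -/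
def subdiff (Ω : Set (Mat n p)) (τ : ℝ) (f : Mat n p → ℝ) (X : Mat n p) :
    Set (Mat n p) :=
  {v | ∀ Y ∈ Ω, f Y ≥ f X + fip v (Y - X) - τ / 2 * (fnorm (Y - X)) ^ 2}

/-- `C` is a partition of `[p]` into nonempty blocks. -/
def IsPartition (C : Fin ℓ → Finset (Fin p)) : Prop :=
  (∀ i, (C i).Nonempty) ∧ (∀ i j, i ≠ j → Disjoint (C i) (C j)) ∧ (∀ s, ∃ i, s ∈ C i)

/-- The weakly convex Lipschitz setting. -/
structure Setting (n p : ℕ) (f : Mat n p → ℝ) (τ L : ℝ) (Ω : Set (Mat n p)) : Prop where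
  tau_nonneg : 0 ≤ τ
  L_pos : 0 < L
  isOpen : IsOpen Ω
  bounded : ∃ R : ℝ, ∀ Y ∈ Ω, fnorm Y ≤ R
  convex : Convex ℝ Ω
  stiefel_subset : Stiefel n p ⊆ Ω
  lipschitz : ∀ X ∈ Ω, ∀ Y ∈ Ω, |f X - f Y| ≤ L * fnorm (X - Y)
  weaklyConvex : ConvexOn ℝ Ω (fun Z => f Z + τ / 2 * (fnorm Z) ^ 2)

/-- The adaptive proximal objective `Y ↦ f(Y) + (1/(2λ))‖Y-X‖²_{A_X^{-1}}`. -/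
def pobj (C : Fin ℓ → Finset (Fin p)) (f : Mat n p → ℝ) (lam : ℝ) (X Y : Mat n p) : ℝ :=
  f Y + 1 / (2 * lam) * anorm2 C X (Y - X)

/-- The adaptive Moreau envelope `f_λ`. -/
def moreau (C : Fin ℓ → Finset (Fin p)) (f : Mat n p → ℝ) (lam : ℝ) (X : Mat n p) : ℝ :=
  sInf ((fun Y => pobj C f lam X Y) '' Stiefel n p)

open Classical in
/-- The adaptive proximal point `Z_X` (defined via choice; under the standing
hypotheses the minimizer over the Stiefel manifold exists and is unique). -/
def proxPt (C : Fin ℓ → Finset (Fin p)) (f : Mat n p → ℝ) (lam : ℝ) (X : Mat n p) :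
    Mat n p :=
  if h : ∃ Z ∈ Stiefel n p, ∀ Y ∈ Stiefel n p, pobj C f lam X Z ≤ pobj C f lam X Y
  then h.choose else X

/-- The surrogate stationarity measure `Θ_λ(X) = (1/λ)‖Z_X - X‖_{A_X^{-1}}`. -/
def Theta (C : Fin ℓ → Finset (Fin p)) (f : Mat n p → ℝ) (lam : ℝ) (X : Mat n p) : ℝ :=
  1 / lam * Real.sqrt (anorm2 C X (proxPt C f lam X - X))

/-- The type of unordered pairs of distinct indices in `[ℓ]`. -/
def PairT (ℓ : ℕ) := {s : Sym2 (Fin ℓ) // ¬ s.IsDiag}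

instance : Fintype (PairT ℓ) := by unfold PairT; infer_instance
instance : DecidableEq (PairT ℓ) := by unfold PairT; infer_instance
instance : MeasurableSpace (PairT ℓ) := ⊤

/-- The RSSM update as a function of an unordered pair of indices. -/
def updateS (C : Fin ℓ → Finset (Fin p)) (X v : Mat n p) (γ : ℝ) (s : Sym2 (Fin ℓ)) :
    Mat n p :=
  Sym2.lift ⟨fun i j => update C X v γ i j, by
    intro i j
    show update C X v γ i j = update C X v γ j i
    unfold update pblk
    rw [Finset.union_comm (C i) (C j)]⟩ s

/-- The RSSM iterates driven by a sequence `ω` of unordered pairs. -/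
def seqIter (C : Fin ℓ → Finset (Fin p)) (V : Mat n p → Mat n p) (X0 : Mat n p)
    (γ : ℕ → ℝ) (ω : ℕ → PairT ℓ) : ℕ → Mat n p
  | 0 => X0
  | k + 1 => updateS C (seqIter C V X0 γ ω k) (V (seqIter C V X0 γ ω k)) (γ k) (ω k).1

/-- The RSSM iterate after `k` steps driven by a finite prefix of unordered pairs. -/
def preIter (C : Fin ℓ → Finset (Fin p)) (V : Mat n p → Mat n p) (X0 : Mat n p)
    (γ : ℕ → ℝ) : (k : ℕ) → (Fin k → PairT ℓ) → Mat n p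
  | 0, _ => X0
  | k + 1, g =>
      updateS C (preIter C V X0 γ k (fun m => g m.castSucc))
        (V (preIter C V X0 γ k (fun m => g m.castSucc))) (γ k) (g (Fin.last k)).1

/-- `E[h(X^k)]`, the average over all prefixes of unordered pairs of length `k`. -/
def Eavg (C : Fin ℓ → Finset (Fin p)) (V : Mat n p → Mat n p) (X0 : Mat n p)
    (γ : ℕ → ℝ) (k : ℕ) (h : Mat n p → ℝ) : ℝ :=
  (1 / (Fintype.card (PairT ℓ) : ℝ)) ^ k * ∑ g : Fin k → PairT ℓ, h (preIter C V X0 γ k g)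


variable {n p ℓ : ℕ}

/-- Diagonal indicator projection matrix of a set of columns. -/
def Pm (D : Finset (Fin p)) : Matrix (Fin p) (Fin p) ℝ :=
  Matrix.of fun s t => if s = t ∧ s ∈ D then 1 else 0

lemma sel_mul_sel_transpose (D : Finset (Fin p)) : sel D * (sel D)ᵀ = Pm D := by
  ext s t
  simp only [Matrix.mul_apply, Matrix.transpose_apply, sel, Matrix.of_apply, Pm]
  by_cases hs : s ∈ D
  · have hs' : s ∈ Set.range (D.orderEmbOfFin rfl) := by
      rw [Finset.range_orderEmbOfFin]; exact hs
    obtain ⟨k0, hk0⟩ := hs'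
    rw [Finset.sum_eq_single k0]
    · rw [if_pos hk0.symm, one_mul]
      by_cases hst : s = t
      · subst hst
        rw [if_pos hk0.symm, if_pos ⟨rfl, hs⟩]
      · rw [if_neg, if_neg (fun h => hst h.1)]
        intro h
        exact hst ((h.trans hk0).symm)
    · intro k _ hk
      rw [if_neg, zero_mul]
      intro h
      exact hk ((D.orderEmbOfFin rfl).injective (h.symm.trans hk0.symm))
    · intro h
      exact absurd (Finset.mem_univ k0) h
  · rw [if_neg (fun h => hs h.2)]
    apply Finset.sum_eq_zero
    intro k _
    rw [if_neg, zero_mul]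
    intro h
    exact hs (by rw [h]; exact Finset.orderEmbOfFin_mem D rfl k)

lemma Pm_compl (D : Finset (Fin p)) : Pm Dᶜ = 1 - Pm D := by
  ext s t
  simp only [Pm, Matrix.of_apply, Matrix.sub_apply, Matrix.one_apply]
  by_cases hst : s = t
  · subst hst
    by_cases hs : s ∈ D <;> simp [hs]
  · simp [hst]

lemma Pm_mul (D : Finset (Fin p)) (M : Matrix (Fin p) (Fin p) ℝ) :
    Pm D * M = Matrix.of fun s t => (if s ∈ D then (1:ℝ) else 0) * M s t := by
  ext s t
  simp only [Matrix.mul_apply, Pm, Matrix.of_apply]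
  by_cases hs : s ∈ D
  · simp [hs, ite_and, ite_mul, Finset.sum_ite_eq]
  · simp [hs, ite_and]

lemma mul_Pm (D : Finset (Fin p)) (M : Matrix (Fin p) (Fin p) ℝ) :
    M * Pm D = Matrix.of fun s t => M s t * (if t ∈ D then (1:ℝ) else 0) := by
  ext s t
  simp only [Matrix.mul_apply, Pm, Matrix.of_apply]
  by_cases ht : t ∈ D
  · simp [ht, ite_and, mul_ite, Finset.sum_ite_eq']
  · simp [ht, ite_and]

lemma Pm_mul_Pm (D : Finset (Fin p)) (M : Matrix (Fin p) (Fin p) ℝ) :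
    Pm D * M * Pm D
      = Matrix.of fun s t =>
          ((if s ∈ D then (1:ℝ) else 0) * (if t ∈ D then (1:ℝ) else 0)) * M s t := by
  rw [Pm_mul, mul_Pm]
  ext s t
  simp only [Matrix.of_apply]
  ring

/-- The counting lemma over ordered pairs of distinct indices. -/
lemma count_off (a b : Fin ℓ) :
    ∑ q ∈ (Finset.univ : Finset (Fin ℓ)).offDiag,
        ((if a = q.1 ∨ a = q.2 then (1:ℝ) else 0) * (if b = q.1 ∨ b = q.2 then (1:ℝ) else 0))
      = if a = b then 2*((ℓ:ℝ)-1) else 2 := by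
  set G : Fin ℓ × Fin ℓ → ℝ := fun q =>
    ((if a = q.1 then (1:ℝ) else 0) + (if a = q.2 then (1:ℝ) else 0))
      * ((if b = q.1 then (1:ℝ) else 0) + (if b = q.2 then (1:ℝ) else 0)) with hG
  have hcong : ∀ q ∈ (Finset.univ : Finset (Fin ℓ)).offDiag,
      ((if a = q.1 ∨ a = q.2 then (1:ℝ) else 0) * (if b = q.1 ∨ b = q.2 then (1:ℝ) else 0))
        = G q := by
    intro q hq
    have hne : q.1 ≠ q.2 := (Finset.mem_offDiag.mp hq).2.2
    simp only [hG]
    by_cases h1 : a = q.1 <;> by_cases h2 : a = q.2 <;>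
      by_cases h3 : b = q.1 <;> by_cases h4 : b = q.2 <;> simp_all
  rw [Finset.sum_congr rfl hcong]
  have hsplit := Finset.sum_union (M := ℝ)
    (Finset.disjoint_diag_offDiag (Finset.univ : Finset (Fin ℓ))) (f := G)
  rw [Finset.diag_union_offDiag] at hsplit
  have hdiag : ∑ q ∈ (Finset.univ : Finset (Fin ℓ)).diag, G q
      = if a = b then 4 else 0 := by
    rw [Finset.sum_diag]
    simp only [hG]
    by_cases hab : a = b
    · subst hab
      simp only [if_pos rfl]
      have : ∀ i : Fin ℓ, ((if a = i then (1:ℝ) else 0) + (if a = i then (1:ℝ) else 0))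
          * ((if a = i then (1:ℝ) else 0) + (if a = i then (1:ℝ) else 0))
            = if a = i then (4:ℝ) else 0 := by
        intro i; by_cases h : a = i <;> simp [h] <;> norm_num
      rw [Finset.sum_congr rfl fun i _ => this i]
      simp [Finset.sum_ite_eq]
    · rw [if_neg hab]
      apply Finset.sum_eq_zero
      intro i _
      by_cases h1 : a = i <;> by_cases h2 : b = i <;> simp_all <;> exact hab (h1.trans h2.symm) 
  have htot : ∑ q ∈ (Finset.univ : Finset (Fin ℓ)) ×ˢ (Finset.univ : Finset (Fin ℓ)), G q
      = if a = b then 2*(ℓ:ℝ) + 2 else 2 := by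
    rw [Finset.sum_product]
    simp only [hG, add_mul, mul_add, Finset.sum_add_distrib]
    by_cases hab : a = b
    · subst hab
      simp [ite_mul, mul_ite, Finset.sum_ite_eq, Finset.mul_sum, Finset.sum_const,
        Finset.card_univ]
      ring
    · simp [ite_mul, mul_ite, Finset.sum_ite_eq, Finset.mul_sum, Finset.sum_const,
        Finset.card_univ, hab, Ne.symm hab]
      norm_num
  have : ∑ q ∈ (Finset.univ : Finset (Fin ℓ)).offDiag, G q
      = (if a = b then 2*(ℓ:ℝ) + 2 else 2) - (if a = b then 4 else 0) := by
    rw [← htot, ← hdiag, hsplit]; ring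
  rw [this]
  by_cases hab : a = b <;> simp [hab] <;> ring


variable {n p ℓ : ℕ}

/-- Generic operator form: `Z (f ⊡ Zᵀξ) + α (ξ - Z Zᵀ ξ)`. -/
def gop (c : Fin p → Fin ℓ) (f : Fin ℓ → Fin ℓ → ℝ) (α : ℝ) (Z ξ : Mat n p) : Mat n p :=
  Z * (Matrix.of fun s t => f (c s) (c t) * (Zᵀ * ξ) s t) + α • (ξ - Z * (Zᵀ * ξ))

lemma gop_Zt (c : Fin p → Fin ℓ) (f : Fin ℓ → Fin ℓ → ℝ) (α : ℝ) (Z : Mat n p)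
    (hZ : Zᵀ * Z = 1) (ξ : Mat n p) :
    Zᵀ * gop c f α Z ξ = Matrix.of fun s t => f (c s) (c t) * (Zᵀ * ξ) s t := by
  unfold gop
  rw [Matrix.mul_add, Matrix.mul_smul, Matrix.mul_sub, ← Matrix.mul_assoc, hZ, Matrix.one_mul,
    ← Matrix.mul_assoc, hZ, Matrix.one_mul, sub_self, smul_zero, add_zero]

lemma gop_inv (c : Fin p → Fin ℓ) (f g : Fin ℓ → Fin ℓ → ℝ) (α β : ℝ)
    (hfg : ∀ a b, f a b * g a b = 1) (hαβ : α * β = 1)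
    (Z : Mat n p) (hZ : Zᵀ * Z = 1) (ξ : Mat n p) :
    gop c f α Z (gop c g β Z ξ) = ξ := by
  have key : Zᵀ * gop c g β Z ξ = Matrix.of fun s t => g (c s) (c t) * (Zᵀ * ξ) s t :=
    gop_Zt c g β Z hZ ξ
  show Z * (Matrix.of fun s t => f (c s) (c t) * (Zᵀ * gop c g β Z ξ) s t)
      + α • (gop c g β Z ξ - Z * (Zᵀ * gop c g β Z ξ)) = ξ
  rw [key]
  have h2 : (Matrix.of fun s t =>
      f (c s) (c t) * ((Matrix.of fun s t => g (c s) (c t) * (Zᵀ * ξ) s t) s t)) = Zᵀ * ξ := by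
    ext s t
    simp only [Matrix.of_apply, ← mul_assoc, hfg, one_mul]
  rw [h2]
  have h3 : gop c g β Z ξ - Z * (Matrix.of fun s t => g (c s) (c t) * (Zᵀ * ξ) s t)
      = β • (ξ - Z * (Zᵀ * ξ)) := by
    show Z * (Matrix.of fun s t => g (c s) (c t) * (Zᵀ * ξ) s t) + β • (ξ - Z * (Zᵀ * ξ))
        - Z * (Matrix.of fun s t => g (c s) (c t) * (Zᵀ * ξ) s t) = β • (ξ - Z * (Zᵀ * ξ))
    abel
  rw [h3, smul_smul, hαβ, one_smul]
  abel

lemma bhad_eq (C : Fin ℓ → Finset (Fin p)) (c : Fin p → Fin ℓ)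
    (hc : ∀ s i, s ∈ C i ↔ c s = i)
    (A : Matrix (Fin ℓ) (Fin ℓ) ℝ) (M : Matrix (Fin p) (Fin p) ℝ) :
    bhad C A M = Matrix.of fun s t => A (c s) (c t) * M s t := by
  ext s t
  simp only [bhad, Matrix.of_apply]
  congr 1
  simp only [hc, ite_and]
  simp [Finset.sum_ite_eq]

lemma sum_Pm (C : Fin ℓ → Finset (Fin p)) (c : Fin p → Fin ℓ)
    (hc : ∀ s i, s ∈ C i ↔ c s = i) :
    ∑ q ∈ (Finset.univ : Finset (Fin ℓ)).offDiag, Pm (C q.1 ∪ C q.2)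
      = (2*((ℓ:ℝ)-1)) • (1 : Matrix (Fin p) (Fin p) ℝ) := by
  ext s t
  rw [Matrix.sum_apply]
  by_cases hst : s = t
  · subst hst
    have hterm : ∀ q : Fin ℓ × Fin ℓ, (Pm (C q.1 ∪ C q.2)) s s
        = (if c s = q.1 ∨ c s = q.2 then (1:ℝ) else 0)
          * (if c s = q.1 ∨ c s = q.2 then (1:ℝ) else 0) := by
      intro q
      simp only [Pm, Matrix.of_apply, Finset.mem_union, hc, true_and]
      by_cases h : c s = q.1 ∨ c s = q.2 <;> simp [h]
    rw [Finset.sum_congr rfl fun q _ => hterm q, count_off (c s) (c s), if_pos rfl]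
    simp
  · have hterm : ∀ q : Fin ℓ × Fin ℓ, (Pm (C q.1 ∪ C q.2)) s t = 0 := by
      intro q
      simp [Pm, hst]
    rw [Finset.sum_congr rfl fun q _ => hterm q]
    simp [Matrix.one_apply, hst]

lemma sum_PmMPm (C : Fin ℓ → Finset (Fin p)) (c : Fin p → Fin ℓ)
    (hc : ∀ s i, s ∈ C i ↔ c s = i) (M : Matrix (Fin p) (Fin p) ℝ) :
    ∑ q ∈ (Finset.univ : Finset (Fin ℓ)).offDiag,
        Pm (C q.1 ∪ C q.2) * M * Pm (C q.1 ∪ C q.2)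
      = Matrix.of fun s t => (if c s = c t then 2*((ℓ:ℝ)-1) else 2) * M s t := by
  ext s t
  rw [Matrix.sum_apply]
  have hterm : ∀ q : Fin ℓ × Fin ℓ,
      (Pm (C q.1 ∪ C q.2) * M * Pm (C q.1 ∪ C q.2)) s t
        = ((if c s = q.1 ∨ c s = q.2 then (1:ℝ) else 0)
            * (if c t = q.1 ∨ c t = q.2 then (1:ℝ) else 0)) * M s t := by
    intro q
    rw [Pm_mul_Pm]
    simp only [Matrix.of_apply, Finset.mem_union, hc]
  rw [Finset.sum_congr rfl fun q _ => hterm q, ← Finset.sum_mul,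
    count_off (c s) (c t)]
  simp

lemma avg_form (hl : 2 ≤ ℓ) (C : Fin ℓ → Finset (Fin p)) (c : Fin p → Fin ℓ)
    (hc : ∀ s i, s ∈ C i ↔ c s = i) (Z ξ : Mat n p) :
    avg C Z ξ = gop c (fun a b => if a = b then 2/(ℓ:ℝ) else 2/((ℓ:ℝ)*((ℓ:ℝ)-1)))
      (2/(ℓ:ℝ)) Z ξ := by
  have hl2 : (2:ℝ) ≤ (ℓ:ℝ) := by exact_mod_cast hl
  have hℓ0 : (ℓ:ℝ) ≠ 0 := by linarith
  have hℓ1 : (ℓ:ℝ) - 1 ≠ 0 := by linarith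
  unfold avg
  have hterm : ∀ q : Fin ℓ × Fin ℓ,
      ((1 : Matrix (Fin n) (Fin n) ℝ)
          - (Z * sel ((C q.1 ∪ C q.2)ᶜ)) * (Z * sel ((C q.1 ∪ C q.2)ᶜ))ᵀ)
        * (ξ * sel (C q.1 ∪ C q.2)) * (sel (C q.1 ∪ C q.2))ᵀ
        = ξ * Pm (C q.1 ∪ C q.2) - Z * ((Zᵀ * ξ) * Pm (C q.1 ∪ C q.2))
          + Z * (Pm (C q.1 ∪ C q.2) * (Zᵀ * ξ) * Pm (C q.1 ∪ C q.2)) := by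
    intro q
    set D := C q.1 ∪ C q.2 with hD
    have h1 : (Z * sel Dᶜ) * (Z * sel Dᶜ)ᵀ = Z * (1 - Pm D) * Zᵀ := by
      rw [Matrix.transpose_mul, ← Pm_compl, ← sel_mul_sel_transpose]
      simp only [Matrix.mul_assoc]
    have h2 : ((1 : Matrix (Fin n) (Fin n) ℝ) - (Z * sel Dᶜ) * (Z * sel Dᶜ)ᵀ)
        * (ξ * sel D) * (sel D)ᵀ
        = ((1 : Matrix (Fin n) (Fin n) ℝ) - (Z * sel Dᶜ) * (Z * sel Dᶜ)ᵀ)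
          * (ξ * (sel D * (sel D)ᵀ)) := by
      simp only [Matrix.mul_assoc]
    rw [h2, sel_mul_sel_transpose, h1]
    simp only [Matrix.sub_mul, Matrix.mul_sub, Matrix.one_mul, Matrix.mul_one,
      Matrix.mul_assoc]
    abel
  rw [Finset.sum_congr rfl fun q _ => hterm q]
  rw [Finset.sum_add_distrib, Finset.sum_sub_distrib]
  simp only [← Matrix.mul_sum]
  rw [sum_Pm C c hc, sum_PmMPm C c hc (Zᵀ * ξ)]
  simp only [Matrix.mul_smul, Matrix.mul_one]
  have hT : ((ℓ:ℝ)*((ℓ:ℝ)-1))⁻¹ •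
      (Z * (Matrix.of fun s t => (if c s = c t then 2*((ℓ:ℝ)-1) else 2) * (Zᵀ*ξ) s t))
      = Z * (Matrix.of fun s t =>
          (if c s = c t then 2/(ℓ:ℝ) else 2/((ℓ:ℝ)*((ℓ:ℝ)-1))) * (Zᵀ*ξ) s t) := by
    rw [← Matrix.mul_smul]
    congr 1
    ext s t
    simp only [Matrix.smul_apply, Matrix.of_apply, smul_eq_mul]
    by_cases h : c s = c t
    · rw [if_pos h, if_pos h, ← mul_assoc]
      congr 1
      field_simp <;> ring
    · rw [if_neg h, if_neg h, ← mul_assoc]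
      congr 1
      field_simp <;> ring
  have hs : ((ℓ:ℝ)*((ℓ:ℝ)-1))⁻¹ * (2*((ℓ:ℝ)-1)) = 2/(ℓ:ℝ) := by
    field_simp <;> ring
  rw [smul_add, smul_sub, smul_smul, smul_smul, hs, hT]
  simp only [gop]
  rw [smul_sub]
  abel

lemma Bop_form (hl : 2 ≤ ℓ) (C : Fin ℓ → Finset (Fin p)) (c : Fin p → Fin ℓ)
    (hc : ∀ s i, s ∈ C i ↔ c s = i) (Z ξ : Mat n p) :
    Bop C Z ξ = gop c (fun a b => if a = b then (ℓ:ℝ)/2 else (ℓ:ℝ)*((ℓ:ℝ)-1)/2)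
      ((ℓ:ℝ)/2) Z ξ := by
  have hl2 : (2:ℝ) ≤ (ℓ:ℝ) := by exact_mod_cast hl
  have hℓ1 : (ℓ:ℝ) - 1 ≠ 0 := by linarith
  unfold Bop
  rw [bhad_eq C c hc]
  have h1 : choose2 ℓ • (Matrix.of fun s t => Qmat ℓ (c s) (c t) * (Zᵀ*ξ) s t)
      = Matrix.of fun s t =>
          (if c s = c t then (ℓ:ℝ)/2 else (ℓ:ℝ)*((ℓ:ℝ)-1)/2) * (Zᵀ*ξ) s t := by
    ext s t
    simp only [Matrix.smul_apply, Matrix.of_apply, smul_eq_mul, Qmat, choose2]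
    by_cases h : c s = c t
    · rw [if_pos h, if_pos h]
      field_simp <;> ring
    · rw [if_neg h, if_neg h]
      ring
  rw [h1]
  have h2 : ((1 : Matrix (Fin n) (Fin n) ℝ) - Z * Zᵀ) * ξ = ξ - Z * (Zᵀ * ξ) := by
    rw [Matrix.sub_mul, Matrix.one_mul, Matrix.mul_assoc]
  rw [h2]
  rfl

lemma Bop_split (hl : 2 ≤ ℓ) (C : Fin ℓ → Finset (Fin p)) (c : Fin p → Fin ℓ)
    (hc : ∀ s i, s ∈ C i ↔ c s = i) (Z ξ : Mat n p) :
    Bop C Z ξ = ((ℓ:ℝ)/2) • ξ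
      + ((ℓ:ℝ)*((ℓ:ℝ)-2)/2) • (Z * bhad C (Jmat ℓ - 1) (Zᵀ * ξ)) := by
  rw [Bop_form hl C c hc, bhad_eq C c hc]
  have key : (Matrix.of fun s t =>
        (if c s = c t then (ℓ:ℝ)/2 else (ℓ:ℝ)*((ℓ:ℝ)-1)/2) * (Zᵀ*ξ) s t)
      = ((ℓ:ℝ)/2) • (Zᵀ * ξ)
        + ((ℓ:ℝ)*((ℓ:ℝ)-2)/2) •
            (Matrix.of fun s t => (Jmat ℓ - 1) (c s) (c t) * (Zᵀ*ξ) s t) := by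
    ext s t
    simp only [Matrix.of_apply, Matrix.add_apply, Matrix.smul_apply, smul_eq_mul,
      Matrix.sub_apply, Jmat, Matrix.one_apply]
    by_cases h : c s = c t
    · rw [if_pos h, if_pos h]
      ring
    · rw [if_neg h, if_neg h]
      ring
  simp only [gop]
  rw [key, Matrix.mul_add, Matrix.mul_smul, Matrix.mul_smul, smul_sub]
  abel


/-- Lemma A.3: `B_Z` inverts the averaging operator, and the
difference formula for `B_Y - B_X`. -/
theorem Bop_inverse_and_difference
    (n p ℓ : ℕ) (hp : 1 ≤ p) (hpn : p ≤ n) (hl : 2 ≤ ℓ)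
    (C : Fin ℓ → Finset (Fin p)) (hpart : IsPartition C) :
    (∀ Z ∈ Stiefel n p, ∀ ξ : Mat n p,
      Bop C Z (avg C Z ξ) = ξ ∧ avg C Z (Bop C Z ξ) = ξ) ∧
    (∀ X ∈ Stiefel n p, ∀ Y ∈ Stiefel n p, ∀ ξ : Mat n p,
      Bop C Y ξ - Bop C X ξ
        = ((ℓ : ℝ) * ((ℓ : ℝ) - 2) / 2) •
            (Y * bhad C (Jmat ℓ - 1) (Yᵀ * ξ) - X * bhad C (Jmat ℓ - 1) (Xᵀ * ξ))) := by
  obtain ⟨hne, hdisj, hcov⟩ := hpart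
  choose c hcmem using hcov
  have hc : ∀ s i, s ∈ C i ↔ c s = i := by
    intro s i
    constructor
    · intro h
      by_contra hne'
      exact Finset.disjoint_left.mp (hdisj _ _ hne') (hcmem s) h
    · intro h
      rw [← h]; exact hcmem s
  have hl2 : (2:ℝ) ≤ (ℓ:ℝ) := by exact_mod_cast hl
  have hℓ0 : (ℓ:ℝ) ≠ 0 := by linarith
  have hℓ1 : (ℓ:ℝ) - 1 ≠ 0 := by linarith
  have hfg1 : ∀ a b : Fin ℓ,
      (if a = b then (ℓ:ℝ)/2 else (ℓ:ℝ)*((ℓ:ℝ)-1)/2)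
        * (if a = b then 2/(ℓ:ℝ) else 2/((ℓ:ℝ)*((ℓ:ℝ)-1))) = 1 := by
    intro a b
    rcases eq_or_ne a b with h | h
    · rw [if_pos h, if_pos h]
      field_simp <;> ring
    · rw [if_neg h, if_neg h]
      field_simp <;> ring
  have hfg2 : ∀ a b : Fin ℓ,
      (if a = b then 2/(ℓ:ℝ) else 2/((ℓ:ℝ)*((ℓ:ℝ)-1)))
        * (if a = b then (ℓ:ℝ)/2 else (ℓ:ℝ)*((ℓ:ℝ)-1)/2) = 1 := by
    intro a b
    rcases eq_or_ne a b with h | h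
    · rw [if_pos h, if_pos h]
      field_simp <;> ring
    · rw [if_neg h, if_neg h]
      field_simp <;> ring
  have hab1 : (ℓ:ℝ)/2 * (2/(ℓ:ℝ)) = 1 := by field_simp <;> ring
  have hab2 : 2/(ℓ:ℝ) * ((ℓ:ℝ)/2) = 1 := by field_simp <;> ring
  constructor
  · intro Z hZ ξ
    have hZ' : Zᵀ * Z = 1 := hZ
    constructor
    · rw [avg_form hl C c hc, Bop_form hl C c hc]
      exact gop_inv c _ _ _ _ hfg1 hab1 Z hZ' ξ
    · rw [Bop_form hl C c hc, avg_form hl C c hc]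
      exact gop_inv c _ _ _ _ hfg2 hab2 Z hZ' ξ
  · intro X hX Y hY ξ
    rw [Bop_split hl C c hc Y ξ, Bop_split hl C c hc X ξ, smul_sub]
    abel



end RSSM
end
end

section
/- Assume the weakly convex Lipschitz setting, let λ ∈ (0, ℓ/(2(τ + (2ℓ−1)L))), and let X ∈ St(n,p). Let Z_X be the unique minimizer of Y ↦ f(Y) + (1/(2λ))‖Y−X‖_{A_X^{-1}}² over St(n,p), and set Θ_λ(X) := (1/λ)‖Z_X − X‖_{A_X^{-1}}. Then the following are equivalent: (a) Θ_λ(X) = 0; (b) X = Z_X; (c) there exists w ∈ ∂f(X) with P_{T_X}(w) = 0 (i.e., X is a stationary point of f over St(n,p)). -/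
/-!
Common definitions for the formalization of results from
"Nonsmooth Optimization over the Stiefel Manifold via a Randomized
Submanifold Subgradient Method" (RSSM).
-/

open Matrix Finset

noncomputable section

namespace RSSM

variable {n p ℓ : ℕ}

/-! ### Auxiliary lemmas -/

section Aux

/-- Embedding of matrices into Euclidean space. -/
def toE (A : Mat n p) : EuclideanSpace ℝ (Fin n × Fin p) :=
  (WithLp.equiv 2 _).symm (fun q => A q.1 q.2)

lemma toE_add (A B : Mat n p) : toE (A + B) = toE A + toE B := rfl
lemma toE_smul (c : ℝ) (A : Mat n p) : toE (c • A) = c • toE A := rfl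
lemma toE_eq_zero {A : Mat n p} (h : toE A = 0) : A = 0 := by
  ext i j; have := congrArg (fun z : EuclideanSpace ℝ (Fin n × Fin p) => z (i, j)) h; simpa [toE] using this

lemma fip_eq_sum (A B : Mat n p) : fip A B = ∑ t, ∑ s, A s t * B s t := by
  simp [fip, Matrix.trace, Matrix.diag, Matrix.mul_apply, Matrix.transpose_apply]

lemma fip_eq_inner (A B : Mat n p) : fip A B = inner ℝ (toE A) (toE B) := by
  rw [fip_eq_sum, PiLp.inner_apply]
  simp [toE, Fintype.sum_prod_type]
  rw [Finset.sum_comm]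
  exact Finset.sum_congr rfl fun _ _ => Finset.sum_congr rfl fun _ _ => mul_comm _ _

lemma fnorm_eq_norm (A : Mat n p) : fnorm A = ‖toE A‖ := by
  rw [fnorm, fip_eq_inner, real_inner_self_eq_norm_mul_norm,
    Real.sqrt_mul_self (norm_nonneg _)]

lemma fnorm_nonneg (A : Mat n p) : 0 ≤ fnorm A := Real.sqrt_nonneg _

lemma fip_self_nonneg (A : Mat n p) : 0 ≤ fip A A := by
  rw [fip_eq_sum]
  exact Finset.sum_nonneg fun t _ => Finset.sum_nonneg fun s _ => mul_self_nonneg _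

lemma fnorm_sq (A : Mat n p) : fnorm A ^ 2 = fip A A := Real.sq_sqrt (fip_self_nonneg A)

lemma fnorm_eq_zero_iff {A : Mat n p} : fnorm A = 0 ↔ A = 0 := by
  rw [fnorm_eq_norm, norm_eq_zero]
  exact ⟨toE_eq_zero, by rintro rfl; rfl⟩

lemma fip_comm (A B : Mat n p) : fip A B = fip B A := by
  rw [fip_eq_sum, fip_eq_sum]; congr 1; ext t; congr 1; ext s; ring

lemma fip_add_left (A B Cm : Mat n p) : fip (A + B) Cm = fip A Cm + fip B Cm := by
  simp [fip, Matrix.transpose_add, Matrix.add_mul]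

lemma fip_add_right (A B Cm : Mat n p) : fip A (B + Cm) = fip A B + fip A Cm := by
  simp [fip, Matrix.mul_add]

lemma fip_smul_left (c : ℝ) (A B : Mat n p) : fip (c • A) B = c * fip A B := by
  simp [fip, Matrix.transpose_smul, Matrix.smul_mul]

lemma fip_smul_right (c : ℝ) (A B : Mat n p) : fip A (c • B) = c * fip A B := by
  simp [fip, Matrix.mul_smul]

lemma fip_zero_right (A : Mat n p) : fip A 0 = 0 := by simp [fip]

lemma fip_sub_left (A B Cm : Mat n p) : fip (A - B) Cm = fip A Cm - fip B Cm := by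
  simp [fip, Matrix.transpose_sub, Matrix.sub_mul]

lemma fip_sub_right (A B Cm : Mat n p) : fip A (B - Cm) = fip A B - fip A Cm := by
  simp [fip, Matrix.mul_sub]

lemma fip_abs_le (A B : Mat n p) : |fip A B| ≤ fnorm A * fnorm B := by
  rw [fip_eq_inner, fnorm_eq_norm, fnorm_eq_norm]
  exact abs_real_inner_le_norm _ _

lemma fnorm_add_le (A B : Mat n p) : fnorm (A + B) ≤ fnorm A + fnorm B := by
  rw [fnorm_eq_norm, fnorm_eq_norm, fnorm_eq_norm, toE_add]
  exact norm_add_le _ _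

lemma fnorm_smul (c : ℝ) (A : Mat n p) : fnorm (c • A) = |c| * fnorm A := by
  rw [fnorm_eq_norm, fnorm_eq_norm, toE_smul, norm_smul, Real.norm_eq_abs]

lemma fnorm_sub_fnorm_le (A B : Mat n p) : fnorm A - fnorm B ≤ fnorm (A - B) := by
  rw [fnorm_eq_norm, fnorm_eq_norm, fnorm_eq_norm]
  have : toE (A - B) = toE A - toE B := rfl
  rw [this]
  exact norm_sub_norm_le _ _

lemma fnorm_transpose {a b : ℕ} (A : Matrix (Fin a) (Fin b) ℝ) : fnorm Aᵀ = fnorm A := by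
  unfold fnorm
  congr 1
  rw [fip_eq_sum, fip_eq_sum, Finset.sum_comm]
  simp [Matrix.transpose_apply]

lemma fnorm_mul_le {a b c : ℕ} (A : Matrix (Fin a) (Fin b) ℝ) (B : Matrix (Fin b) (Fin c) ℝ) :
    fnorm (A * B) ≤ fnorm A * fnorm B := by
  have h1 : fip (A * B) (A * B) ≤ fip A A * fip B B := by
    rw [fip_eq_sum, fip_eq_sum, fip_eq_sum]
    calc ∑ t, ∑ s, (A * B) s t * (A * B) s t
        ≤ ∑ t, ∑ s, (∑ k, A s k ^ 2) * (∑ k, B k t ^ 2) := by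
          apply Finset.sum_le_sum; intro t _
          apply Finset.sum_le_sum; intro s _
          have := Finset.sum_mul_sq_le_sq_mul_sq Finset.univ (fun k => A s k) (fun k => B k t)
          simpa [Matrix.mul_apply, pow_two] using this
      _ = (∑ t, ∑ s, A s t * A s t) * (∑ t, ∑ s, B s t * B s t) := by
          have h : ∀ t, ∑ s : Fin a, (∑ k : Fin b, A s k ^ 2) * (∑ k : Fin b, B k t ^ 2)
              = (∑ s : Fin a, ∑ k : Fin b, A s k ^ 2) * (∑ k : Fin b, B k t ^ 2) := by
            intro t; rw [Finset.sum_mul]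
          simp_rw [h]
          rw [← Finset.mul_sum]
          congr 1
          · rw [Finset.sum_comm]; simp [pow_two]
          · simp [pow_two]
  have h2 : (fnorm (A * B)) ^ 2 ≤ (fnorm A * fnorm B) ^ 2 := by
    rw [mul_pow, fnorm_sq, fnorm_sq, fnorm_sq]; exact h1
  nlinarith [fnorm_nonneg (A * B), fnorm_nonneg A, fnorm_nonneg B,
    mul_nonneg (fnorm_nonneg A) (fnorm_nonneg B)]

lemma fip_matmul {a : ℕ} (A : Matrix (Fin n) (Fin a) ℝ) (B : Matrix (Fin a) (Fin p) ℝ)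
    (Cm : Mat n p) : fip (A * B) Cm = fip B (Aᵀ * Cm) := by
  rw [fip, fip, Matrix.transpose_mul, Matrix.mul_assoc]

lemma fip_sym_transpose {a : ℕ} {S A : Matrix (Fin a) (Fin a) ℝ} (hS : Sᵀ = S) :
    fip S Aᵀ = fip S A := by
  rw [fip, fip, hS]
  rw [← Matrix.trace_transpose (S * Aᵀ), Matrix.transpose_mul, Matrix.transpose_transpose, hS]
  exact Matrix.trace_mul_comm A S

end Aux

section Aux2

variable {X : Mat n p}

lemma proj_transpose (X : Mat n p) :
    ((1 : Matrix (Fin n) (Fin n) ℝ) - X * Xᵀ)ᵀ = 1 - X * Xᵀ := by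
  rw [Matrix.transpose_sub, Matrix.transpose_one, Matrix.transpose_mul,
    Matrix.transpose_transpose]

lemma proj_idem (hX : Xᵀ * X = 1) :
    ((1 : Matrix (Fin n) (Fin n) ℝ) - X * Xᵀ) * (1 - X * Xᵀ) = 1 - X * Xᵀ := by
  have h : X * Xᵀ * (X * Xᵀ) = X * Xᵀ := by
    rw [Matrix.mul_assoc X Xᵀ _, ← Matrix.mul_assoc Xᵀ X Xᵀ, hX, Matrix.one_mul]
  rw [Matrix.sub_mul, Matrix.one_mul, Matrix.mul_sub, Matrix.mul_one, h]
  abel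

lemma fip_proj_self (hX : Xᵀ * X = 1) (ξ : Mat n p) :
    fip ((1 - X * Xᵀ) * ξ) ξ = fip ((1 - X * Xᵀ) * ξ) ((1 - X * Xᵀ) * ξ) := by
  rw [fip_matmul, fip_matmul, proj_transpose, ← Matrix.mul_assoc, proj_idem hX]

lemma Xt_proj (hX : Xᵀ * X = 1) : Xᵀ * ((1 : Matrix (Fin n) (Fin n) ℝ) - X * Xᵀ) = 0 := by
  rw [Matrix.mul_sub, Matrix.mul_one, ← Matrix.mul_assoc, hX, Matrix.one_mul, sub_self]

lemma decomp_eq (X : Mat n p) (ξ : Mat n p) :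
    ξ = X * (Xᵀ * ξ) + (1 - X * Xᵀ) * ξ := by
  rw [Matrix.sub_mul, Matrix.one_mul, ← Matrix.mul_assoc]
  abel

lemma fip_cross (hX : Xᵀ * X = 1) (ξ η : Mat n p) :
    fip (X * (Xᵀ * ξ)) ((1 - X * Xᵀ) * η) = 0 := by
  rw [fip_matmul, ← Matrix.mul_assoc, Xt_proj hX, Matrix.zero_mul, fip_zero_right]

lemma fip_iso (hX : Xᵀ * X = 1) (M : Matrix (Fin p) (Fin p) ℝ) :
    fip (X * M) (X * M) = fip M M := by
  rw [fip_matmul, ← Matrix.mul_assoc, hX, Matrix.one_mul]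

lemma norm_decomp (hX : Xᵀ * X = 1) (ξ : Mat n p) :
    fip ξ ξ = fip (Xᵀ * ξ) (Xᵀ * ξ) + fip ((1 - X * Xᵀ) * ξ) ((1 - X * Xᵀ) * ξ) := by
  conv_lhs => rw [decomp_eq X ξ]
  rw [fip_add_left, fip_add_right, fip_add_right, fip_cross hX, fip_iso hX]
  have h2 : fip ((1 - X * Xᵀ) * ξ) (X * (Xᵀ * ξ)) = 0 := by
    rw [fip_comm]; exact fip_cross hX ξ ξ
  linarith

lemma fip_Xt_le (hX : Xᵀ * X = 1) (ξ : Mat n p) :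
    fip (Xᵀ * ξ) (Xᵀ * ξ) ≤ fip ξ ξ := by
  rw [norm_decomp hX ξ]
  have := fip_self_nonneg ((1 - X * Xᵀ) * ξ)
  linarith

lemma fnorm_Xt_le (hX : Xᵀ * X = 1) (ξ : Mat n p) : fnorm (Xᵀ * ξ) ≤ fnorm ξ := by
  unfold fnorm
  exact Real.sqrt_le_sqrt (fip_Xt_le hX ξ)

/-- the combined coefficient in the block Hadamard product -/
def qcoef (C : Fin ℓ → Finset (Fin p)) (s t : Fin p) : ℝ :=
  ∑ i, ∑ j, if s ∈ C i ∧ t ∈ C j then Qmat ℓ i j else 0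

lemma bhad_apply (C : Fin ℓ → Finset (Fin p)) (M : Matrix (Fin p) (Fin p) ℝ) (s t : Fin p) :
    bhad C (Qmat ℓ) M s t = qcoef C s t * M s t := rfl

lemma qcoef_eq {C : Fin ℓ → Finset (Fin p)} (hpart : IsPartition C) (s t : Fin p) :
    ∃ i j, s ∈ C i ∧ t ∈ C j ∧ qcoef C s t = Qmat ℓ i j := by
  obtain ⟨i, hi⟩ := hpart.2.2 s
  obtain ⟨j, hj⟩ := hpart.2.2 t
  refine ⟨i, j, hi, hj, ?_⟩
  unfold qcoef
  rw [Finset.sum_eq_single i]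
  · rw [Finset.sum_eq_single j]
    · simp [hi, hj]
    · intro b _ hb
      have : t ∉ C b := fun ht => Finset.disjoint_left.mp (hpart.2.1 b j hb) ht hj
      simp [this]
    · simp
  · intro b _ hb
    have : s ∉ C b := fun hs => Finset.disjoint_left.mp (hpart.2.1 b i hb) hs hi
    apply Finset.sum_eq_zero
    intro c _
    simp [this]
  · simp

lemma Qmat_bounds (hl : 2 ≤ ℓ) (i j : Fin ℓ) :
    ((ℓ : ℝ) - 1)⁻¹ ≤ Qmat ℓ i j ∧ Qmat ℓ i j ≤ 1 := by
  have hl1 : (1 : ℝ) ≤ (ℓ : ℝ) - 1 := by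
    have : (2 : ℝ) ≤ (ℓ : ℝ) := by exact_mod_cast hl
    linarith
  have hpos : (0 : ℝ) < (ℓ : ℝ) - 1 := by linarith
  have h2ℓ : (2 : ℝ) ≤ (ℓ : ℝ) := by exact_mod_cast hl
  unfold Qmat
  by_cases h : i = j
  · subst h
    simp only [Matrix.of_apply, eq_self_iff_true, if_true]
    have heq : 1 - ((ℓ : ℝ) - 2) / ((ℓ : ℝ) - 1) = ((ℓ : ℝ) - 1)⁻¹ := by
      field_simp
      ring
    constructor
    · rw [heq]
    · have : (0 : ℝ) ≤ ((ℓ : ℝ) - 2) / ((ℓ : ℝ) - 1) := div_nonneg (by linarith) hpos.le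
      linarith
  · simp only [Matrix.of_apply, if_neg h, sub_zero]
    constructor
    · rw [inv_le_one_iff₀]; right; exact hl1
    · exact le_refl 1

lemma qcoef_bounds {C : Fin ℓ → Finset (Fin p)} (hpart : IsPartition C) (hl : 2 ≤ ℓ)
    (s t : Fin p) : ((ℓ : ℝ) - 1)⁻¹ ≤ qcoef C s t ∧ qcoef C s t ≤ 1 := by
  obtain ⟨i, j, _, _, h⟩ := qcoef_eq hpart s t
  rw [h]; exact Qmat_bounds hl i j

lemma anorm2_eq {C : Fin ℓ → Finset (Fin p)} (hX : Xᵀ * X = 1) (ξ : Mat n p) :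
    anorm2 C X ξ = choose2 ℓ * (∑ t, ∑ s, qcoef C s t * ((Xᵀ * ξ) s t) ^ 2)
      + (ℓ : ℝ) / 2 * fip ((1 - X * Xᵀ) * ξ) ((1 - X * Xᵀ) * ξ) := by
  unfold anorm2 Bop
  rw [fip_add_left, fip_smul_left, fip_proj_self hX]
  congr 1
  rw [Matrix.mul_smul, fip_smul_left, fip_matmul]
  congr 1
  rw [fip_eq_sum]
  congr 1; ext t; congr 1; ext s
  rw [bhad_apply]; ring

lemma anorm2_ge {C : Fin ℓ → Finset (Fin p)} (hpart : IsPartition C) (hl : 2 ≤ ℓ)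
    (hX : Xᵀ * X = 1) (ξ : Mat n p) :
    (ℓ : ℝ) / 2 * fip ξ ξ ≤ anorm2 C X ξ := by
  have hl1 : (1 : ℝ) ≤ (ℓ : ℝ) - 1 := by
    have : (2 : ℝ) ≤ (ℓ : ℝ) := by exact_mod_cast hl
    linarith
  have hpos : (0 : ℝ) < (ℓ : ℝ) - 1 := by linarith
  have hc2 : choose2 ℓ * ((ℓ : ℝ) - 1)⁻¹ = (ℓ : ℝ) / 2 := by
    unfold choose2; field_simp
  rw [anorm2_eq hX, norm_decomp hX ξ]
  have h1 : (ℓ : ℝ) / 2 * fip (Xᵀ * ξ) (Xᵀ * ξ)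
      ≤ choose2 ℓ * (∑ t, ∑ s, qcoef C s t * ((Xᵀ * ξ) s t) ^ 2) := by
    have hch : 0 ≤ choose2 ℓ := by
      unfold choose2
      have : (0 : ℝ) ≤ (ℓ : ℝ) := Nat.cast_nonneg ℓ
      positivity
    rw [fip_eq_sum, Finset.mul_sum, Finset.mul_sum]
    apply Finset.sum_le_sum; intro t _
    rw [Finset.mul_sum, Finset.mul_sum]
    apply Finset.sum_le_sum; intro s _
    have hb := (qcoef_bounds hpart hl s t).1
    have hsq : (0 : ℝ) ≤ ((Xᵀ * ξ) s t) ^ 2 := sq_nonneg _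
    have hmm : (Xᵀ * ξ) s t * (Xᵀ * ξ) s t = ((Xᵀ * ξ) s t) ^ 2 := (pow_two _).symm
    have hstep : choose2 ℓ * (((ℓ : ℝ) - 1)⁻¹ * ((Xᵀ * ξ) s t) ^ 2)
        ≤ choose2 ℓ * (qcoef C s t * ((Xᵀ * ξ) s t) ^ 2) :=
      mul_le_mul_of_nonneg_left (mul_le_mul_of_nonneg_right hb hsq) hch
    have heq : choose2 ℓ * (((ℓ : ℝ) - 1)⁻¹ * ((Xᵀ * ξ) s t) ^ 2)
        = (ℓ : ℝ) / 2 * ((Xᵀ * ξ) s t * (Xᵀ * ξ) s t) := by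
      rw [← mul_assoc, hc2, hmm]
    linarith
  linarith [h1]

lemma anorm2_le {C : Fin ℓ → Finset (Fin p)} (hpart : IsPartition C) (hl : 2 ≤ ℓ)
    (hX : Xᵀ * X = 1) (ξ : Mat n p) :
    anorm2 C X ξ ≤ (choose2 ℓ + (ℓ : ℝ) / 2) * fip ξ ξ := by
  have hch : 0 ≤ choose2 ℓ := by
    unfold choose2
    have h2 : (2 : ℝ) ≤ (ℓ : ℝ) := by exact_mod_cast hl
    nlinarith
  have hl2 : (0 : ℝ) ≤ (ℓ : ℝ) / 2 := by positivity
  rw [anorm2_eq hX]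
  have hdec := norm_decomp hX ξ
  have h1 : (∑ t, ∑ s, qcoef C s t * ((Xᵀ * ξ) s t) ^ 2) ≤ fip (Xᵀ * ξ) (Xᵀ * ξ) := by
    rw [fip_eq_sum]
    apply Finset.sum_le_sum; intro t _
    apply Finset.sum_le_sum; intro s _
    have hb := (qcoef_bounds hpart hl s t).2
    have hsq : (0 : ℝ) ≤ ((Xᵀ * ξ) s t) ^ 2 := sq_nonneg _
    calc qcoef C s t * ((Xᵀ * ξ) s t) ^ 2 ≤ 1 * ((Xᵀ * ξ) s t) ^ 2 :=
          mul_le_mul_of_nonneg_right hb hsq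
      _ = (Xᵀ * ξ) s t * (Xᵀ * ξ) s t := by ring
  have h2 : fip (Xᵀ * ξ) (Xᵀ * ξ) ≤ fip ξ ξ := fip_Xt_le hX ξ
  have h3 : fip ((1 - X * Xᵀ) * ξ) ((1 - X * Xᵀ) * ξ) ≤ fip ξ ξ := by
    have := fip_self_nonneg (Xᵀ * ξ); linarith
  have h4 : choose2 ℓ * (∑ t, ∑ s, qcoef C s t * ((Xᵀ * ξ) s t) ^ 2)
      ≤ choose2 ℓ * fip ξ ξ := by
    apply mul_le_mul_of_nonneg_left _ hch
    linarith
  nlinarith [mul_le_mul_of_nonneg_left h3 hl2]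

lemma anorm2_zero {C : Fin ℓ → Finset (Fin p)} (hpart : IsPartition C) (hl : 2 ≤ ℓ)
    (hX : Xᵀ * X = 1) : anorm2 C X 0 = 0 := by
  have h1 := anorm2_ge hpart hl hX 0
  have h2 := anorm2_le hpart hl hX 0
  have : fip (0 : Mat n p) 0 = 0 := by simp [fip]
  rw [this] at h1 h2
  simp at h1 h2
  linarith

end Aux2

section Aux3

variable {X : Mat n p}

lemma symPart_transpose {a : ℕ} (A : Matrix (Fin a) (Fin a) ℝ) :
    (symPart A)ᵀ = symPart A := by
  unfold symPart
  rw [Matrix.transpose_smul, Matrix.transpose_add, Matrix.transpose_transpose, add_comm]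

lemma fnorm_symPart_le {a : ℕ} (A : Matrix (Fin a) (Fin a) ℝ) :
    fnorm (symPart A) ≤ fnorm A := by
  unfold symPart
  rw [fnorm_smul]
  have h := fnorm_add_le A Aᵀ
  rw [fnorm_transpose] at h
  rw [abs_of_nonneg (by norm_num : (0:ℝ) ≤ (1:ℝ)/2)]
  linarith

lemma fip_neg_right (A B : Mat n p) : fip A (-B) = -fip A B := by
  simp [fip, Matrix.mul_neg]

lemma fip_sym_skew {a : ℕ} {S K : Matrix (Fin a) (Fin a) ℝ} (hS : Sᵀ = S)
    (hK : Kᵀ = -K) : fip S K = 0 := by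
  have h1 : fip S K = fip S Kᵀ := (fip_sym_transpose hS).symm
  rw [hK, fip_neg_right] at h1
  linarith

/-- From openness, get a Frobenius-norm ball inside `Ω`. -/
lemma exists_fnorm_ball {Ω : Set (Mat n p)} (hopen : IsOpen Ω) (hXΩ : X ∈ Ω) :
    ∃ δ > 0, ∀ Y : Mat n p, fnorm (Y - X) < δ → Y ∈ Ω := by
  classical
  have hcont : Continuous (fun z : EuclideanSpace ℝ (Fin n × Fin p) =>
      (Matrix.of fun i j => z (i, j) : Mat n p)) := by
    apply continuous_pi
    intro i
    apply continuous_pi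
    intro j
    exact (continuous_apply (i, j)).comp (PiLp.continuous_ofLp ..)
  have hopen' : IsOpen ((fun z : EuclideanSpace ℝ (Fin n × Fin p) =>
      (Matrix.of fun i j => z (i, j) : Mat n p)) ⁻¹' Ω) := hopen.preimage hcont
  have hmem : toE X ∈ ((fun z : EuclideanSpace ℝ (Fin n × Fin p) =>
      (Matrix.of fun i j => z (i, j) : Mat n p)) ⁻¹' Ω) := hXΩ
  obtain ⟨δ, hδ, hball⟩ := Metric.isOpen_iff.mp hopen' (toE X) hmem
  refine ⟨δ, hδ, fun Y hY => ?_⟩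
  have : toE Y ∈ Metric.ball (toE X) δ := by
    rw [Metric.mem_ball, dist_eq_norm]
    have he : toE Y - toE X = toE (Y - X) := rfl
    rw [he, ← fnorm_eq_norm]
    exact hY
  exact hball this

/-- Subgradients of `L`-Lipschitz weakly convex functions are bounded by `L`. -/
lemma subdiff_fnorm_le {Ω : Set (Mat n p)} {f : Mat n p → ℝ} {τ L : ℝ} {w : Mat n p}
    (hτ : 0 ≤ τ) (hL : 0 < L)
    (hlip : ∀ Y ∈ Ω, ∀ Y' ∈ Ω, |f Y - f Y'| ≤ L * fnorm (Y - Y'))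
    (hXΩ : X ∈ Ω) {δ : ℝ} (hδ : 0 < δ) (hball : ∀ Y : Mat n p, fnorm (Y - X) < δ → Y ∈ Ω)
    (hw : w ∈ subdiff Ω τ f X) : fnorm w ≤ L := by
  rcases eq_or_ne w 0 with h0 | h0
  · rw [h0, show fnorm (0 : Mat n p) = 0 from fnorm_eq_zero_iff.mpr rfl]
    exact hL.le
  have hwpos : 0 < fnorm w := by
    rcases lt_or_eq_of_le (fnorm_nonneg w) with h | h
    · exact h
    · exact absurd (fnorm_eq_zero_iff.mp h.symm) h0
  have key : ∀ t : ℝ, 0 < t → t < δ / (fnorm w + 1) →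
      fnorm w ^ 2 ≤ L * fnorm w + τ / 2 * t * fnorm w ^ 2 := by
    intro t ht htδ
    have hmem : X + t • w ∈ Ω := by
      apply hball
      have : X + t • w - X = t • w := by abel
      rw [this, fnorm_smul, abs_of_pos ht]
      have h1 : t * (fnorm w + 1) < δ := by
        rw [← lt_div_iff₀ (by linarith)]
        exact htδ
      nlinarith
    have hsub := hw (X + t • w) hmem
    have heq : X + t • w - X = t • w := by abel
    rw [heq, fip_smul_right, fnorm_smul, abs_of_pos ht] at hsub
    rw [← fnorm_sq] at hsub
    have hlipb : f (X + t • w) - f X ≤ L * (t * fnorm w) := by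
      have := hlip (X + t • w) hmem X hXΩ
      have h2 : X + t • w - X = t • w := by abel
      rw [h2, fnorm_smul, abs_of_pos ht] at this
      exact (abs_le.mp this).2.trans_eq rfl
    have h3 : t * fnorm w ^ 2 ≤ L * (t * fnorm w) + τ / 2 * (t * fnorm w) ^ 2 := by
      nlinarith [hsub, hlipb]
    have h4 : t * (fnorm w ^ 2) ≤ t * (L * fnorm w + τ / 2 * t * fnorm w ^ 2) := by
      nlinarith
    exact (mul_le_mul_iff_right₀ ht).mp h4
  have h5 : fnorm w ^ 2 ≤ L * fnorm w := by
    apply le_of_forall_pos_le_add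
    intro ε hε
    set a := τ / 2 * fnorm w ^ 2 with ha
    have hanneg : 0 ≤ a := by positivity
    set t := min (δ / (fnorm w + 1) / 2) (ε / (a + 1)) with htdef
    have htpos : 0 < t := by
      apply lt_min
      · positivity
      · positivity
    have htlt : t < δ / (fnorm w + 1) := by
      have hh : 0 < δ / (fnorm w + 1) := by positivity
      calc t ≤ δ / (fnorm w + 1) / 2 := min_le_left _ _
        _ < δ / (fnorm w + 1) := by linarith
    have := key t htpos htlt
    have hat : a * t ≤ ε := by
      have h6 : t ≤ ε / (a + 1) := min_le_right _ _
      have h7 : a * t ≤ a * (ε / (a + 1)) := mul_le_mul_of_nonneg_left h6 hanneg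
      have h8 : a * (ε / (a + 1)) ≤ ε := by
        rw [mul_div_assoc']
        rw [div_le_iff₀ (by linarith)]
        nlinarith
      linarith
    have : τ / 2 * t * fnorm w ^ 2 = a * t := by rw [ha]; ring
    linarith [key t htpos htlt]
  nlinarith

/-- Key identity: for `X, Y` on the Stiefel manifold. -/
lemma stiefel_sym_diff {Y : Mat n p} (hX : Xᵀ * X = 1) (hY : Yᵀ * Y = 1) :
    symPart (Xᵀ * Y) - 1 = -((1:ℝ)/2) • ((Y - X)ᵀ * (Y - X)) := by
  have h1 : (Y - X)ᵀ * (Y - X) = ((1:ℝ) + 1) • (1 : Matrix (Fin p) (Fin p) ℝ)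
      - (Xᵀ * Y + (Xᵀ * Y)ᵀ) := by
    rw [Matrix.transpose_sub, Matrix.sub_mul, Matrix.mul_sub, Matrix.mul_sub, hX, hY,
      Matrix.transpose_mul, Matrix.transpose_transpose]
    rw [show ((1:ℝ) + 1) • (1 : Matrix (Fin p) (Fin p) ℝ) = 1 + 1 by
      rw [add_smul, one_smul]]
    abel
  unfold symPart
  rw [h1]
  module

end Aux3

section Curve

lemma ctr {a b : ℕ} (A : Matrix (Fin a) (Fin b) ℝ) : Aᴴ = Aᵀ := by
  ext i j; simp [Matrix.conjTranspose_apply]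

lemma fip_diagonal {a : ℕ} (v : Fin a → ℝ) :
    fip (Matrix.diagonal v) (Matrix.diagonal v) = ∑ i, v i ^ 2 := by
  rw [fip_eq_sum]
  have h : ∀ t : Fin a, ∑ s, Matrix.diagonal v s t * Matrix.diagonal v s t = v t ^ 2 := by
    intro t
    rw [Finset.sum_eq_single t]
    · simp [Matrix.diagonal_apply_eq, pow_two]
    · intro b _ hb; simp [Matrix.diagonal_apply_ne v hb]
    · simp
  simp_rw [h]

lemma fnorm_conj {a : ℕ} {U : Matrix (Fin a) (Fin a) ℝ} (hU1 : Uᵀ * U = 1)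
    (A : Matrix (Fin a) (Fin a) ℝ) : fnorm (U * A * Uᵀ) = fnorm A := by
  unfold fnorm
  congr 1
  rw [fip, fip]
  have ht : (U * A * Uᵀ)ᵀ = U * Aᵀ * Uᵀ := by
    rw [Matrix.transpose_mul, Matrix.transpose_mul, Matrix.transpose_transpose,
      ← Matrix.mul_assoc]
  rw [ht]
  have hmid : U * Aᵀ * Uᵀ * (U * A * Uᵀ) = U * (Aᵀ * A) * Uᵀ := by
    simp only [Matrix.mul_assoc]
    rw [← Matrix.mul_assoc Uᵀ U, hU1, Matrix.one_mul]
  rw [hmid, Matrix.trace_mul_cycle, hU1, Matrix.one_mul]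

/-- Quadratic retraction curve on the Stiefel manifold. -/
lemma stiefel_curve {X ξ : Mat n p} (hX : Xᵀ * X = 1) (hξ : Xᵀ * ξ + ξᵀ * X = 0) (t : ℝ) :
    ∃ Y : Mat n p, Yᵀ * Y = 1 ∧
      fnorm (Y - (X + t • ξ)) ≤ (fnorm X + |t| * fnorm ξ) * (t ^ 2 * fip ξ ξ) := by
  classical
  set S := ξᵀ * ξ with hSdef
  have hH : S.IsHermitian := by
    show Sᴴ = S
    rw [ctr, hSdef, Matrix.transpose_mul, Matrix.transpose_transpose]
  have hPSD : S.PosSemidef := by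
    have := Matrix.posSemidef_conjTranspose_mul_self ξ
    rwa [ctr] at this
  set μ : Fin p → ℝ := hH.eigenvalues with hμdef
  have hμ : ∀ i, 0 ≤ μ i := fun i => hPSD.eigenvalues_nonneg i
  set U : Matrix (Fin p) (Fin p) ℝ := (hH.eigenvectorUnitary : Matrix (Fin p) (Fin p) ℝ)
    with hUdef
  have hU2 : U * Uᵀ = 1 := by
    have h := (Matrix.mem_unitaryGroup_iff).mp (hH.eigenvectorUnitary).2
    rwa [Matrix.star_eq_conjTranspose, ctr] at h
  have hU1 : Uᵀ * U = 1 := by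
    have h := (Matrix.mem_unitaryGroup_iff').mp (hH.eigenvectorUnitary).2
    rwa [Matrix.star_eq_conjTranspose, ctr] at h
  have hspec : S = U * Matrix.diagonal μ * Uᵀ := by
    have h := hH.spectral_theorem
    rwa [Unitary.conjStarAlgAut_apply, Matrix.star_eq_conjTranspose, ctr,
      show RCLike.ofReal ∘ hH.eigenvalues = hH.eigenvalues by ext i; simp] at h
  set e : Fin p → ℝ := fun i => 1 + t ^ 2 * μ i with hedef
  have he1 : ∀ i, 1 ≤ e i := by
    intro i
    have : 0 ≤ t ^ 2 * μ i := mul_nonneg (sq_nonneg t) (hμ i)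
    simp only [hedef]; linarith
  have hepos : ∀ i, 0 < e i := fun i => lt_of_lt_of_le one_pos (he1 i)
  set d : Fin p → ℝ := fun i => (Real.sqrt (e i))⁻¹ with hddef
  have hdpos : ∀ i, 0 < d i := fun i => inv_pos.mpr (Real.sqrt_pos.mpr (hepos i))
  have hde : ∀ i, d i * e i * d i = 1 := by
    intro i
    have hs : Real.sqrt (e i) * Real.sqrt (e i) = e i := Real.mul_self_sqrt (hepos i).le
    have hd : d i = (Real.sqrt (e i))⁻¹ := rfl
    rw [hd, show (Real.sqrt (e i))⁻¹ * e i * (Real.sqrt (e i))⁻¹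
      = e i / (Real.sqrt (e i) * Real.sqrt (e i)) by ring, hs, div_self (hepos i).ne']
  set R : Matrix (Fin p) (Fin p) ℝ := U * Matrix.diagonal d * Uᵀ with hRdef
  -- Gram matrix identity
  have hgram : (X + t • ξ)ᵀ * (X + t • ξ) = U * Matrix.diagonal e * Uᵀ := by
    have h1 : (X + t • ξ)ᵀ * (X + t • ξ) = 1 + (t ^ 2) • S := by
      rw [Matrix.transpose_add, Matrix.transpose_smul, Matrix.add_mul, Matrix.mul_add,
        Matrix.mul_add, hX]
      have h2 : Xᵀ * (t • ξ) = t • (Xᵀ * ξ) := by rw [Matrix.mul_smul]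
      have h3 : (t • ξᵀ) * X = t • (ξᵀ * X) := by rw [Matrix.smul_mul]
      have h4 : (t • ξᵀ) * (t • ξ) = (t ^ 2) • S := by
        rw [Matrix.smul_mul, Matrix.mul_smul, smul_smul, hSdef, pow_two]
      rw [h2, h3, h4]
      have h5 : t • (Xᵀ * ξ) + t • (ξᵀ * X) = 0 := by
        rw [← smul_add, hξ, smul_zero]
      have h6 : (1 : Matrix (Fin p) (Fin p) ℝ) + t • (Xᵀ * ξ) + (t • (ξᵀ * X) + t ^ 2 • S)
          = 1 + (t • (Xᵀ * ξ) + t • (ξᵀ * X)) + t ^ 2 • S := by abel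
      rw [h6, h5, add_zero]
    rw [h1]
    have h7 : Matrix.diagonal e = 1 + (t ^ 2) • Matrix.diagonal μ := by
      ext i j
      by_cases h : i = j
      · subst h
        simp [Matrix.diagonal_apply_eq, Matrix.one_apply_eq, Matrix.add_apply,
          Matrix.smul_apply, hedef, smul_eq_mul]
      · simp [Matrix.diagonal_apply_ne _ h, Matrix.one_apply_ne h, Matrix.add_apply,
          Matrix.smul_apply, smul_eq_mul]
    rw [h7, Matrix.mul_add, Matrix.add_mul, Matrix.mul_one, hU2]
    congr 1
    rw [Matrix.mul_smul, Matrix.smul_mul, hspec]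
  refine ⟨(X + t • ξ) * R, ?_, ?_⟩
  · -- orthonormality
    have hRt : Rᵀ = R := by
      rw [hRdef, Matrix.transpose_mul, Matrix.transpose_mul, Matrix.transpose_transpose,
        Matrix.diagonal_transpose, Matrix.mul_assoc]
    have hdd : Matrix.diagonal d * Matrix.diagonal e * Matrix.diagonal d
        = (1 : Matrix (Fin p) (Fin p) ℝ) := by
      rw [Matrix.diagonal_mul_diagonal, Matrix.diagonal_mul_diagonal]
      rw [show (fun i => d i * e i * d i) = (1 : Fin p → ℝ) from funext hde]
      exact Matrix.diagonal_one
    rw [Matrix.transpose_mul]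
    rw [Matrix.mul_assoc Rᵀ _ _, ← Matrix.mul_assoc ((X + t • ξ)ᵀ) _ _, hgram, hRt, hRdef]
    simp only [Matrix.mul_assoc]
    rw [← Matrix.mul_assoc Uᵀ U, hU1, Matrix.one_mul]
    rw [← Matrix.mul_assoc Uᵀ U, hU1, Matrix.one_mul]
    -- goal : U * (diag d * (diag e * (diag d * Uᵀ))) = 1
    rw [← Matrix.mul_assoc (Matrix.diagonal d) (Matrix.diagonal e) _,
      ← Matrix.mul_assoc (Matrix.diagonal d * Matrix.diagonal e) (Matrix.diagonal d) _,
      hdd, Matrix.one_mul, hU2]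
  · -- distance bound
    have hfact : (X + t • ξ) * R - (X + t • ξ) = (X + t • ξ) * (R - 1) := by
      rw [Matrix.mul_sub, Matrix.mul_one]
    rw [hfact]
    have hR1 : R - 1 = U * Matrix.diagonal (fun i => d i - 1) * Uᵀ := by
      rw [hRdef, show Matrix.diagonal (fun i => d i - 1)
          = Matrix.diagonal d - 1 by rw [← Matrix.diagonal_one, Matrix.diagonal_sub],
        Matrix.mul_sub, Matrix.sub_mul, Matrix.mul_one, hU2]
    have hd1 : ∀ i, |d i - 1| ≤ t ^ 2 * μ i := by
      intro i
      have hdle : d i ≤ 1 := by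
        have h1 : 1 ≤ Real.sqrt (e i) := by
          rw [show (1:ℝ) = Real.sqrt 1 by rw [Real.sqrt_one]]
          exact Real.sqrt_le_sqrt (he1 i)
        exact inv_le_one_of_one_le₀ h1
      have hdge : 1 - t ^ 2 * μ i ≤ d i := by
        rcases le_or_gt 1 (t ^ 2 * μ i) with hc | hc
        · linarith [(hdpos i).le]
        · have hsle : Real.sqrt (e i) ≤ e i := by
            have : e i ≤ e i ^ 2 := by nlinarith [he1 i]
            calc Real.sqrt (e i) ≤ Real.sqrt (e i ^ 2) := Real.sqrt_le_sqrt this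
              _ = e i := Real.sqrt_sq (hepos i).le
          have hinv : (e i)⁻¹ ≤ d i := by
            apply inv_anti₀ (Real.sqrt_pos.mpr (hepos i)) hsle
          have h2 : 1 - t ^ 2 * μ i ≤ (e i)⁻¹ := by
            have hei : e i = 1 + t ^ 2 * μ i := rfl
            rw [← one_div, le_div_iff₀ (hepos i)]
            nlinarith [hei, mul_nonneg (sq_nonneg t) (hμ i)]
          linarith
      rw [abs_le]
      constructor <;> linarith
    have hnormdiag : fnorm (Matrix.diagonal (fun i => d i - 1)) ≤ t ^ 2 * fip ξ ξ := by
      have h1 : fip (Matrix.diagonal (fun i => d i - 1)) (Matrix.diagonal (fun i => d i - 1))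
          = ∑ i, (d i - 1) ^ 2 := fip_diagonal _
      have h2 : ∑ i, (d i - 1) ^ 2 ≤ (∑ i, |d i - 1|) ^ 2 := by
        have := Finset.sum_sq_le_sq_sum_of_nonneg
          (s := Finset.univ) (f := fun i => |d i - 1|) (fun i _ => abs_nonneg _)
        calc ∑ i, (d i - 1) ^ 2 = ∑ i, |d i - 1| ^ 2 := by simp [sq_abs]
          _ ≤ (∑ i, |d i - 1|) ^ 2 := this
      have h3 : ∑ i, |d i - 1| ≤ t ^ 2 * (∑ i, μ i) := by
        rw [Finset.mul_sum]
        exact Finset.sum_le_sum fun i _ => hd1 i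
      have h4 : ∑ i, μ i = fip ξ ξ := by
        have h5 : (Matrix.diagonal μ).trace = ∑ i, μ i := Matrix.trace_diagonal μ
        have h6 : S.trace = (Matrix.diagonal μ).trace := by
          rw [hspec, Matrix.trace_mul_cycle, hU1, Matrix.one_mul]
        have h7 : S.trace = fip ξ ξ := rfl
        rw [← h7, h6, h5]
      have hsum_nonneg : 0 ≤ ∑ i, |d i - 1| := Finset.sum_nonneg fun i _ => abs_nonneg _
      have h8 : 0 ≤ t ^ 2 * fip ξ ξ := mul_nonneg (sq_nonneg t) (fip_self_nonneg ξ)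
      unfold fnorm
      rw [h1]
      calc Real.sqrt (∑ i, (d i - 1) ^ 2) ≤ Real.sqrt ((∑ i, |d i - 1|) ^ 2) :=
            Real.sqrt_le_sqrt h2
        _ = ∑ i, |d i - 1| := Real.sqrt_sq hsum_nonneg
        _ ≤ t ^ 2 * (∑ i, μ i) := h3
        _ = t ^ 2 * fip ξ ξ := by rw [h4]
    have hXtξ : fnorm (X + t • ξ) ≤ fnorm X + |t| * fnorm ξ := by
      calc fnorm (X + t • ξ) ≤ fnorm X + fnorm (t • ξ) := fnorm_add_le _ _
        _ = fnorm X + |t| * fnorm ξ := by rw [fnorm_smul]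
    calc fnorm ((X + t • ξ) * (R - 1)) ≤ fnorm (X + t • ξ) * fnorm (R - 1) := fnorm_mul_le _ _
      _ ≤ (fnorm X + |t| * fnorm ξ) * (t ^ 2 * fip ξ ξ) := by
          apply mul_le_mul hXtξ _ (fnorm_nonneg _) _
          · rw [hR1, fnorm_conj hU1]
            exact hnormdiag
          · have := fnorm_nonneg X
            have h9 : 0 ≤ |t| * fnorm ξ := mul_nonneg (abs_nonneg t) (fnorm_nonneg ξ)
            linarith

end Curve

section Nmach

/-- difference quotient -/
def qdq (G : Mat n p → ℝ) (X ξ : Mat n p) (t : ℝ) : ℝ := (G (X + t • ξ) - G X) / t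

/-- admissible radius -/
def rad (δ : ℝ) (ξ : Mat n p) : ℝ := δ / (fnorm ξ + 1)

/-- lower directional derivative -/
def Nfun (G : Mat n p → ℝ) (X : Mat n p) (δ : ℝ) (ξ : Mat n p) : ℝ :=
  sInf (qdq G X ξ '' Set.Ioo 0 (rad δ ξ))

lemma rad_pos {δ : ℝ} (hδ : 0 < δ) (ξ : Mat n p) : 0 < rad δ ξ := by
  unfold rad
  have := fnorm_nonneg ξ
  positivity

lemma fnorm_neg (A : Mat n p) : fnorm (-A) = fnorm A := by
  rw [show -A = (-1 : ℝ) • A by simp, fnorm_smul]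
  norm_num

lemma mem_of_lt_rad {Ω : Set (Mat n p)} {X : Mat n p} {δ : ℝ}
    (hball : ∀ Y : Mat n p, fnorm (Y - X) < δ → Y ∈ Ω) {ξ : Mat n p} {t : ℝ}
    (ht : 0 < t) (htr : t < rad δ ξ) : X + t • ξ ∈ Ω := by
  apply hball
  rw [add_sub_cancel_left, fnorm_smul, abs_of_pos ht]
  have h1 : t * (fnorm ξ + 1) < δ := by
    rw [← lt_div_iff₀ (by linarith [fnorm_nonneg ξ])]
    exact htr
  nlinarith [fnorm_nonneg ξ]

lemma qdq_mono {Ω : Set (Mat n p)} {G : Mat n p → ℝ} {X : Mat n p}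
    (hG : ConvexOn ℝ Ω G) (hXΩ : X ∈ Ω) {ξ : Mat n p} {s t : ℝ}
    (hs : 0 < s) (hst : s ≤ t) (htΩ : X + t • ξ ∈ Ω) :
    qdq G X ξ s ≤ qdq G X ξ t := by
  have ht : 0 < t := lt_of_lt_of_le hs hst
  have ha : (0:ℝ) ≤ 1 - s / t := by
    rw [sub_nonneg, div_le_one ht]; exact hst
  have hb : (0:ℝ) ≤ s / t := by positivity
  have hab : (1 - s / t) + s / t = 1 := by ring
  have hcvx := hG.2 hXΩ htΩ ha hb hab
  have hpt : (1 - s / t) • X + (s / t) • (X + t • ξ) = X + s • ξ := by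
    rw [smul_add, smul_smul, div_mul_cancel₀ _ ht.ne', sub_smul, one_smul]
    abel
  rw [hpt] at hcvx
  unfold qdq
  rw [div_le_div_iff₀ hs ht]
  have h2 : G (X + s • ξ) * t ≤ ((1 - s / t) * G X + s / t * G (X + t • ξ)) * t :=
    mul_le_mul_of_nonneg_right hcvx ht.le
  have h3 : ((1 - s / t) * G X + s / t * G (X + t • ξ)) * t
      = G X * t - s * G X + s * G (X + t • ξ) := by
    field_simp
  nlinarith [h2, h3]

lemma qdq_lb {Ω : Set (Mat n p)} {G : Mat n p → ℝ} {X : Mat n p} {K : ℝ}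
    (hLip : ∀ Y ∈ Ω, ∀ Y' ∈ Ω, |G Y - G Y'| ≤ K * fnorm (Y - Y')) (hXΩ : X ∈ Ω)
    {ξ : Mat n p} {t : ℝ} (ht : 0 < t) (htΩ : X + t • ξ ∈ Ω) :
    -K * fnorm ξ ≤ qdq G X ξ t := by
  have h := hLip (X + t • ξ) htΩ X hXΩ
  rw [add_sub_cancel_left, fnorm_smul, abs_of_pos ht] at h
  unfold qdq
  rw [le_div_iff₀ ht]
  have h1 := (abs_le.mp h).1
  nlinarith

lemma Nfun_bddBelow {Ω : Set (Mat n p)} {G : Mat n p → ℝ} {X : Mat n p} {K δ : ℝ}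
    (hLip : ∀ Y ∈ Ω, ∀ Y' ∈ Ω, |G Y - G Y'| ≤ K * fnorm (Y - Y')) (hXΩ : X ∈ Ω)
    (hball : ∀ Y : Mat n p, fnorm (Y - X) < δ → Y ∈ Ω) (ξ : Mat n p) :
    BddBelow (qdq G X ξ '' Set.Ioo 0 (rad δ ξ)) := by
  refine ⟨-K * fnorm ξ, ?_⟩
  rintro b ⟨t, ⟨ht0, htr⟩, rfl⟩
  exact qdq_lb hLip hXΩ ht0 (mem_of_lt_rad hball ht0 htr)

lemma Nfun_nonempty {G : Mat n p → ℝ} {X : Mat n p} {δ : ℝ} (hδ : 0 < δ) (ξ : Mat n p) :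
    (qdq G X ξ '' Set.Ioo 0 (rad δ ξ)).Nonempty := by
  refine ⟨qdq G X ξ (rad δ ξ / 2), Set.mem_image_of_mem _ ?_⟩
  constructor
  · linarith [rad_pos hδ ξ]
  · linarith [rad_pos hδ ξ]

lemma Nfun_le {Ω : Set (Mat n p)} {G : Mat n p → ℝ} {X : Mat n p} {K δ : ℝ}
    (hLip : ∀ Y ∈ Ω, ∀ Y' ∈ Ω, |G Y - G Y'| ≤ K * fnorm (Y - Y')) (hXΩ : X ∈ Ω)
    (hball : ∀ Y : Mat n p, fnorm (Y - X) < δ → Y ∈ Ω) {ξ : Mat n p} {t : ℝ}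
    (ht : t ∈ Set.Ioo 0 (rad δ ξ)) : Nfun G X δ ξ ≤ qdq G X ξ t :=
  csInf_le (Nfun_bddBelow hLip hXΩ hball ξ) (Set.mem_image_of_mem _ ht)

lemma Nfun_le_of_mem {Ω : Set (Mat n p)} {G : Mat n p → ℝ} {X : Mat n p} {K δ : ℝ}
    (hG : ConvexOn ℝ Ω G)
    (hLip : ∀ Y ∈ Ω, ∀ Y' ∈ Ω, |G Y - G Y'| ≤ K * fnorm (Y - Y')) (hXΩ : X ∈ Ω)
    (hδ : 0 < δ) (hball : ∀ Y : Mat n p, fnorm (Y - X) < δ → Y ∈ Ω) {ξ : Mat n p} {t : ℝ}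
    (ht : 0 < t) (htΩ : X + t • ξ ∈ Ω) : Nfun G X δ ξ ≤ qdq G X ξ t := by
  have hrp := rad_pos hδ ξ
  set s := min t (rad δ ξ / 2) with hsdef
  have hs0 : 0 < s := lt_min ht (by linarith)
  have hsr : s < rad δ ξ := by
    calc s ≤ rad δ ξ / 2 := min_le_right _ _
      _ < rad δ ξ := by linarith
  have h1 : Nfun G X δ ξ ≤ qdq G X ξ s := Nfun_le hLip hXΩ hball ⟨hs0, hsr⟩
  have h2 : qdq G X ξ s ≤ qdq G X ξ t := qdq_mono hG hXΩ hs0 (min_le_left _ _) htΩ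
  linarith

lemma le_Nfun {Ω : Set (Mat n p)} {G : Mat n p → ℝ} {X : Mat n p} {K δ : ℝ}
    (hG : ConvexOn ℝ Ω G)
    (hLip : ∀ Y ∈ Ω, ∀ Y' ∈ Ω, |G Y - G Y'| ≤ K * fnorm (Y - Y')) (hXΩ : X ∈ Ω)
    (hδ : 0 < δ) (hball : ∀ Y : Mat n p, fnorm (Y - X) < δ → Y ∈ Ω) {ξ : Mat n p}
    {c A r' : ℝ} (hr'0 : 0 < r') (hr' : r' ≤ rad δ ξ) (hA : 0 ≤ A)
    (h : ∀ s : ℝ, 0 < s → s < r' → c ≤ qdq G X ξ s + A * s) : c ≤ Nfun G X δ ξ := by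
  apply le_csInf (Nfun_nonempty hδ ξ)
  rintro b ⟨t, ⟨ht0, htr⟩, rfl⟩
  apply le_of_forall_pos_le_add
  intro ε hε
  set s := min (min t (r' / 2)) (ε / (A + 1)) with hsdef
  have hs0 : 0 < s := by
    apply lt_min (lt_min ht0 (by linarith)) (by positivity)
  have hsr' : s < r' := by
    calc s ≤ min t (r' / 2) := min_le_left _ _
      _ ≤ r' / 2 := min_le_right _ _
      _ < r' := by linarith
  have h1 := h s hs0 hsr'
  have h2 : qdq G X ξ s ≤ qdq G X ξ t := by
    apply qdq_mono hG hXΩ hs0 ((min_le_left _ _).trans (min_le_left _ _))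
    exact mem_of_lt_rad hball ht0 htr
  have h3 : A * s ≤ ε := by
    have h4 : s ≤ ε / (A + 1) := min_le_right _ _
    have h5 : A * s ≤ A * (ε / (A + 1)) := mul_le_mul_of_nonneg_left h4 hA
    have h6 : A * (ε / (A + 1)) ≤ ε := by
      rw [mul_div_assoc', div_le_iff₀ (by linarith)]
      nlinarith
    linarith
  linarith

lemma Nfun_add {Ω : Set (Mat n p)} {G : Mat n p → ℝ} {X : Mat n p} {K δ : ℝ}
    (hG : ConvexOn ℝ Ω G)
    (hLip : ∀ Y ∈ Ω, ∀ Y' ∈ Ω, |G Y - G Y'| ≤ K * fnorm (Y - Y')) (hXΩ : X ∈ Ω)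
    (hδ : 0 < δ) (hball : ∀ Y : Mat n p, fnorm (Y - X) < δ → Y ∈ Ω) (x y : Mat n p) :
    Nfun G X δ (x + y) ≤ Nfun G X δ x + Nfun G X δ y := by
  apply le_of_forall_pos_le_add
  intro ε hε
  obtain ⟨b₁, hb₁mem, hb₁⟩ := exists_lt_of_csInf_lt (Nfun_nonempty hδ x)
    (show Nfun G X δ x < Nfun G X δ x + ε / 2 by linarith)
  obtain ⟨t₁, ht₁mem, rfl⟩ := hb₁mem
  obtain ⟨b₂, hb₂mem, hb₂⟩ := exists_lt_of_csInf_lt (Nfun_nonempty hδ y)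
    (show Nfun G X δ y < Nfun G X δ y + ε / 2 by linarith)
  obtain ⟨t₂, ht₂mem, rfl⟩ := hb₂mem
  have hrp := rad_pos hδ (x + y)
  set t := min (min (t₁ / 2) (t₂ / 2)) (rad δ (x + y) / 2) with htdef
  have ht0 : 0 < t := lt_min (lt_min (by linarith [ht₁mem.1]) (by linarith [ht₂mem.1]))
    (by linarith)
  have htr : t < rad δ (x + y) := by
    calc t ≤ rad δ (x + y) / 2 := min_le_right _ _
      _ < rad δ (x + y) := by linarith
  have h2t₁ : 2 * t ≤ t₁ := by
    have := (min_le_left _ _).trans' (le_refl t)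
    have h := (min_le_left _ _ : t ≤ min (t₁ / 2) (t₂ / 2))
    have h' := (min_le_left _ _ : min (t₁ / 2) (t₂ / 2) ≤ t₁ / 2)
    linarith
  have h2t₂ : 2 * t ≤ t₂ := by
    have h := (min_le_left _ _ : t ≤ min (t₁ / 2) (t₂ / 2))
    have h' := (min_le_right _ _ : min (t₁ / 2) (t₂ / 2) ≤ t₂ / 2)
    linarith
  have hmemx : X + (2 * t) • x ∈ Ω :=
    mem_of_lt_rad hball (by linarith) (lt_of_le_of_lt h2t₁ ht₁mem.2)
  have hmemy : X + (2 * t) • y ∈ Ω :=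
    mem_of_lt_rad hball (by linarith) (lt_of_le_of_lt h2t₂ ht₂mem.2)
  have hmid : qdq G X (x + y) t ≤ qdq G X x (2 * t) + qdq G X y (2 * t) := by
    have hcvx := hG.2 hmemx hmemy (by norm_num : (0:ℝ) ≤ 1/2) (by norm_num : (0:ℝ) ≤ 1/2)
      (by norm_num : (1:ℝ)/2 + 1/2 = 1)
    have hpt : (1/2 : ℝ) • (X + (2 * t) • x) + (1/2 : ℝ) • (X + (2 * t) • y)
        = X + t • (x + y) := by
      module
    rw [hpt] at hcvx
    unfold qdq
    rw [← add_div, div_le_div_iff₀ ht0 (by linarith)]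
    have h2 : G (X + t • (x + y)) * (2 * t)
        ≤ (1/2 * G (X + (2*t) • x) + 1/2 * G (X + (2*t) • y)) * (2 * t) :=
      mul_le_mul_of_nonneg_right hcvx (by linarith)
    nlinarith [h2]
  have hfin : Nfun G X δ (x + y) ≤ qdq G X (x + y) t := Nfun_le hLip hXΩ hball ⟨ht0, htr⟩
  have hx2t : qdq G X x (2 * t) ≤ qdq G X x t₁ :=
    qdq_mono hG hXΩ (by linarith) h2t₁ (mem_of_lt_rad hball ht₁mem.1 ht₁mem.2)
  have hy2t : qdq G X y (2 * t) ≤ qdq G X y t₂ :=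
    qdq_mono hG hXΩ (by linarith) h2t₂ (mem_of_lt_rad hball ht₂mem.1 ht₂mem.2)
  linarith

lemma Nfun_smul_le {Ω : Set (Mat n p)} {G : Mat n p → ℝ} {X : Mat n p} {K δ : ℝ}
    (hG : ConvexOn ℝ Ω G)
    (hLip : ∀ Y ∈ Ω, ∀ Y' ∈ Ω, |G Y - G Y'| ≤ K * fnorm (Y - Y')) (hXΩ : X ∈ Ω)
    (hδ : 0 < δ) (hball : ∀ Y : Mat n p, fnorm (Y - X) < δ → Y ∈ Ω) {c : ℝ} (hc : 0 < c)
    (ξ : Mat n p) : Nfun G X δ (c • ξ) ≤ c * Nfun G X δ ξ := by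
  apply le_of_forall_pos_le_add
  intro ε hε
  obtain ⟨b₁, hb₁mem, hb₁⟩ := exists_lt_of_csInf_lt (Nfun_nonempty hδ ξ)
    (show Nfun G X δ ξ < Nfun G X δ ξ + ε / c by
      have : 0 < ε / c := by positivity
      linarith)
  obtain ⟨t₁, ht₁mem, rfl⟩ := hb₁mem
  have hrp := rad_pos hδ (c • ξ)
  set t := min (t₁ / c) (rad δ (c • ξ) / 2) with htdef
  have ht0 : 0 < t := lt_min (div_pos ht₁mem.1 hc) (by linarith)
  have htr : t < rad δ (c • ξ) := by
    calc t ≤ rad δ (c • ξ) / 2 := min_le_right _ _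
      _ < rad δ (c • ξ) := by linarith
  have hct : c * t ≤ t₁ := by
    have h := (min_le_left (t₁ / c) (rad δ (c • ξ) / 2) : t ≤ t₁ / c)
    calc c * t ≤ c * (t₁ / c) := mul_le_mul_of_nonneg_left h hc.le
      _ = t₁ := by field_simp
  have hqeq : qdq G X (c • ξ) t = c * qdq G X ξ (c * t) := by
    unfold qdq
    rw [smul_smul, show t * c = c * t from mul_comm t c]
    have hD : ∀ D : ℝ, D / t = c * (D / (c * t)) := by
      intro D
      field_simp
    exact hD _
  have hNle : Nfun G X δ (c • ξ) ≤ qdq G X (c • ξ) t := Nfun_le hLip hXΩ hball ⟨ht0, htr⟩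
  have hq2 : qdq G X ξ (c * t) ≤ qdq G X ξ t₁ :=
    qdq_mono hG hXΩ (by positivity) hct (mem_of_lt_rad hball ht₁mem.1 ht₁mem.2)
  have h2 : c * qdq G X ξ (c * t) ≤ c * qdq G X ξ t₁ := mul_le_mul_of_nonneg_left hq2 hc.le
  have h3 : c * qdq G X ξ t₁ ≤ c * (Nfun G X δ ξ + ε / c) :=
    mul_le_mul_of_nonneg_left hb₁.le hc.le
  have h4 : c * (Nfun G X δ ξ + ε / c) = c * Nfun G X δ ξ + ε := by
    field_simp
  rw [hqeq] at hNle
  linarith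

lemma Nfun_smul {Ω : Set (Mat n p)} {G : Mat n p → ℝ} {X : Mat n p} {K δ : ℝ}
    (hG : ConvexOn ℝ Ω G)
    (hLip : ∀ Y ∈ Ω, ∀ Y' ∈ Ω, |G Y - G Y'| ≤ K * fnorm (Y - Y')) (hXΩ : X ∈ Ω)
    (hδ : 0 < δ) (hball : ∀ Y : Mat n p, fnorm (Y - X) < δ → Y ∈ Ω) {c : ℝ} (hc : 0 < c)
    (ξ : Mat n p) : Nfun G X δ (c • ξ) = c * Nfun G X δ ξ := by
  apply le_antisymm (Nfun_smul_le hG hLip hXΩ hδ hball hc ξ)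
  have h := Nfun_smul_le hG hLip hXΩ hδ hball (inv_pos.mpr hc) (c • ξ)
  rw [smul_smul, inv_mul_cancel₀ hc.ne', one_smul] at h
  have h2 := mul_le_mul_of_nonneg_left h hc.le
  rw [← mul_assoc, mul_inv_cancel₀ hc.ne', one_mul] at h2
  exact h2

end Nmach

/-- The tangent space at `X` as a submodule. -/
def tangentSub (X : Mat n p) : Submodule ℝ (Mat n p) where
  carrier := {ξ : Mat n p | Xᵀ * ξ + ξᵀ * X = 0}
  add_mem' := by
    intro a b ha hb
    simp only [Set.mem_setOf_eq] at ha hb ⊢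
    rw [Matrix.mul_add, Matrix.transpose_add, Matrix.add_mul]
    have he : Xᵀ * a + Xᵀ * b + (aᵀ * X + bᵀ * X)
        = (Xᵀ * a + aᵀ * X) + (Xᵀ * b + bᵀ * X) := by abel
    rw [he, ha, hb, add_zero]
  zero_mem' := by simp
  smul_mem' := by
    intro c x hx
    simp only [Set.mem_setOf_eq] at hx ⊢
    rw [Matrix.mul_smul, Matrix.transpose_smul, Matrix.smul_mul, ← smul_add, hx, smul_zero]

/-- The linear functional `ξ ↦ τ⟨X, ξ⟩` on the tangent space. -/
def tangentφ (τ : ℝ) (X : Mat n p) : tangentSub X →ₗ[ℝ] ℝ where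
  toFun := fun ξ => τ * fip X ξ.1
  map_add' := by
    intro a b
    simp only [Submodule.coe_add]
    rw [fip_add_right]
    ring
  map_smul' := by
    intro c a
    simp only [Submodule.coe_smul, RingHom.id_apply, smul_eq_mul]
    rw [fip_smul_right]
    ring

set_option maxHeartbeats 1000000 in
/-- Domination of the tangent functional by the lower directional derivative at a
minimizer of the proximal objective. -/
lemma tangent_dom
    {C : Fin ℓ → Finset (Fin p)} (hpart : IsPartition C) (hl : 2 ≤ ℓ)
    {f : Mat n p → ℝ} {τ L : ℝ} {Ω : Set (Mat n p)} (hset : Setting n p f τ L Ω)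
    {lam : ℝ} (hlam0 : 0 < lam) {X : Mat n p} (hX : X ∈ Stiefel n p)
    (hminX : ∀ Y ∈ Stiefel n p, f X ≤ f Y + 1 / (2 * lam) * anorm2 C X (Y - X))
    {δ : ℝ} (hδ : 0 < δ) (hball : ∀ Y : Mat n p, fnorm (Y - X) < δ → Y ∈ Ω)
    {K : ℝ} (hGlip : ∀ Y ∈ Ω, ∀ Y' ∈ Ω,
      |(f Y + τ / 2 * fnorm Y ^ 2) - (f Y' + τ / 2 * fnorm Y' ^ 2)| ≤ K * fnorm (Y - Y'))
    {ξ : Mat n p} (hξ : Xᵀ * ξ + ξᵀ * X = 0) :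
    τ * fip X ξ ≤ Nfun (fun Z => f Z + τ / 2 * fnorm Z ^ 2) X δ ξ := by
  have hXs : Xᵀ * X = 1 := hX
  have hXΩ : X ∈ Ω := hset.stiefel_subset hX
  have hτ := hset.tau_nonneg
  have hL := hset.L_pos
  have hGconv : ConvexOn ℝ Ω (fun Z => f Z + τ / 2 * fnorm Z ^ 2) := hset.weaklyConvex
  obtain ⟨C₁, hC₁def⟩ : ∃ c, c = (fnorm X + fnorm ξ) * fip ξ ξ := ⟨_, rfl⟩
  have hC₁ : 0 ≤ C₁ := by
    rw [hC₁def]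
    have h1 := fnorm_nonneg X
    have h2 := fnorm_nonneg ξ
    have h3 := fip_self_nonneg ξ
    positivity
  obtain ⟨K₂, hK₂def⟩ : ∃ c, c = choose2 ℓ + (ℓ : ℝ) / 2 := ⟨_, rfl⟩
  have hK₂ : 0 ≤ K₂ := by
    rw [hK₂def]
    unfold choose2
    have h2ℓ : (2:ℝ) ≤ (ℓ : ℝ) := by exact_mod_cast hl
    nlinarith
  obtain ⟨A, hAdef⟩ : ∃ c, c = L * C₁ + 1 / (2 * lam) * (K₂ * (C₁ + fnorm ξ) ^ 2) := ⟨_, rfl⟩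
  have hA : 0 ≤ A := by
    rw [hAdef]
    have h0 : (0:ℝ) ≤ 1 / (2 * lam) := by positivity
    nlinarith [mul_nonneg hK₂ (sq_nonneg (C₁ + fnorm ξ)), mul_nonneg hL.le hC₁,
      mul_nonneg h0 (mul_nonneg hK₂ (sq_nonneg (C₁ + fnorm ξ)))]
  have hrp := rad_pos hδ ξ
  apply le_Nfun hGconv hGlip hXΩ hδ hball
    (r' := min (rad δ ξ) 1) (lt_min hrp one_pos) (min_le_left _ _) hA
  intro s hs0 hsr'
  have hs1 : s ≤ 1 := (lt_of_lt_of_le hsr' (min_le_right _ _)).le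
  have hsrad : s < rad δ ξ := lt_of_lt_of_le hsr' (min_le_left _ _)
  obtain ⟨Y, hYSt, hYb⟩ := stiefel_curve hXs hξ s
  have habs : |s| = s := abs_of_pos hs0
  have hC₀ : fnorm X + |s| * fnorm ξ ≤ fnorm X + fnorm ξ := by
    rw [habs]
    nlinarith [fnorm_nonneg ξ]
  have hYb2 : fnorm (Y - (X + s • ξ)) ≤ s ^ 2 * C₁ := by
    have h1 : (fnorm X + |s| * fnorm ξ) * (s ^ 2 * fip ξ ξ)
        ≤ (fnorm X + fnorm ξ) * (s ^ 2 * fip ξ ξ) := by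
      apply mul_le_mul_of_nonneg_right hC₀
      have := fip_self_nonneg ξ
      positivity
    have h2 : (fnorm X + fnorm ξ) * (s ^ 2 * fip ξ ξ) = s ^ 2 * C₁ := by
      rw [hC₁def]; ring
    linarith [hYb]
  have hXsΩ : X + s • ξ ∈ Ω := mem_of_lt_rad hball hs0 hsrad
  have hYΩ : Y ∈ Ω := hset.stiefel_subset hYSt
  have hlipf := hset.lipschitz (X + s • ξ) hXsΩ Y hYΩ
  have hfl : f Y - L * (s ^ 2 * C₁) ≤ f (X + s • ξ) := by
    rw [show X + s • ξ - Y = -(Y - (X + s • ξ)) from by abel, fnorm_neg] at hlipf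
    have h1 := (abs_le.mp hlipf).1
    have h2 : L * fnorm (Y - (X + s • ξ)) ≤ L * (s ^ 2 * C₁) :=
      mul_le_mul_of_nonneg_left hYb2 hL.le
    linarith
  have hmin2 := hminX Y hYSt
  have hannle := anorm2_le hpart hl hXs (Y - X)
  have hfn : fnorm (Y - X) ≤ s * (C₁ + fnorm ξ) := by
    have he : Y - X = (Y - (X + s • ξ)) + s • ξ := by abel
    have h1 : fnorm (Y - X) ≤ fnorm (Y - (X + s • ξ)) + fnorm (s • ξ) := by
      rw [he]; exact fnorm_add_le _ _
    rw [fnorm_smul, habs] at h1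
    have h2 : s ^ 2 * C₁ ≤ s * C₁ := by
      have h3 : 0 ≤ s * C₁ * (1 - s) := mul_nonneg (mul_nonneg hs0.le hC₁) (by linarith)
      nlinarith [h3]
    have h4 : s * C₁ + s * fnorm ξ = s * (C₁ + fnorm ξ) := by ring
    linarith [h1, hYb2, h2, h4]
  have hfip2 : fip (Y - X) (Y - X) ≤ s ^ 2 * (C₁ + fnorm ξ) ^ 2 := by
    have h := mul_self_le_mul_self (fnorm_nonneg (Y - X)) hfn
    rw [← fnorm_sq]
    nlinarith [h]
  have hann : anorm2 C X (Y - X) ≤ K₂ * (s ^ 2 * (C₁ + fnorm ξ) ^ 2) := by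
    have h1 := mul_le_mul_of_nonneg_left hfip2 hK₂
    rw [hK₂def] at h1 ⊢
    linarith [hannle]
  have hflower : f X - s ^ 2 * A ≤ f (X + s • ξ) := by
    have h2 : 1 / (2 * lam) * anorm2 C X (Y - X)
        ≤ 1 / (2 * lam) * (K₂ * (s ^ 2 * (C₁ + fnorm ξ) ^ 2)) :=
      mul_le_mul_of_nonneg_left hann (by positivity)
    have hAe : s ^ 2 * A = L * (s ^ 2 * C₁)
        + 1 / (2 * lam) * (K₂ * (s ^ 2 * (C₁ + fnorm ξ) ^ 2)) := by
      rw [hAdef]; ring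
    linarith [hmin2, hfl]
  have hGexp : (f (X + s • ξ) + τ / 2 * fnorm (X + s • ξ) ^ 2) - (f X + τ / 2 * fnorm X ^ 2)
      = (f (X + s • ξ) - f X) + τ / 2 * (2 * s * fip X ξ + s ^ 2 * fip ξ ξ) := by
    have hexp : fnorm (X + s • ξ) ^ 2 = fnorm X ^ 2 + 2 * s * fip X ξ + s ^ 2 * fip ξ ξ := by
      rw [fnorm_sq, fnorm_sq, fip_add_left, fip_add_right, fip_add_right, fip_smul_left,
        fip_smul_right, fip_smul_left, fip_smul_right, fip_comm ξ X]
      ring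
    rw [hexp]
    ring
  have hq : τ * fip X ξ - A * s ≤ qdq (fun Z => f Z + τ / 2 * fnorm Z ^ 2) X ξ s := by
    unfold qdq
    rw [le_div_iff₀ hs0]
    show (τ * fip X ξ - A * s) * s
      ≤ (f (X + s • ξ) + τ / 2 * fnorm (X + s • ξ) ^ 2) - (f X + τ / 2 * fnorm X ^ 2)
    rw [hGexp]
    have hnn : 0 ≤ τ / 2 * (s ^ 2 * fip ξ ξ) := by
      have := fip_self_nonneg ξ
      positivity
    nlinarith [hflower]
  linarith [hq]

set_option maxHeartbeats 1000000 in
/-- A stationary point witness exists at a minimizer of the proximal objective. -/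
lemma exists_stationary_of_min
    {C : Fin ℓ → Finset (Fin p)} (hpart : IsPartition C) (hl : 2 ≤ ℓ)
    {f : Mat n p → ℝ} {τ L : ℝ} {Ω : Set (Mat n p)} (hset : Setting n p f τ L Ω)
    {lam : ℝ} (hlam0 : 0 < lam) {X : Mat n p} (hX : X ∈ Stiefel n p)
    (hminX : ∀ Y ∈ Stiefel n p, f X ≤ f Y + 1 / (2 * lam) * anorm2 C X (Y - X)) :
    ∃ w ∈ subdiff Ω τ f X, ptan X w = 0 := by
  classical
  have hXs : Xᵀ * X = 1 := hX
  have hXΩ : X ∈ Ω := hset.stiefel_subset hX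
  have hτ := hset.tau_nonneg
  have hL := hset.L_pos
  obtain ⟨R0, hR0⟩ := hset.bounded
  have hR0nn : 0 ≤ R0 := le_trans (fnorm_nonneg X) (hR0 X hXΩ)
  obtain ⟨δ, hδ, hball⟩ := exists_fnorm_ball hset.isOpen hXΩ
  have hGconv : ConvexOn ℝ Ω (fun Z => f Z + τ / 2 * fnorm Z ^ 2) := hset.weaklyConvex
  have hGlip : ∀ Y ∈ Ω, ∀ Y' ∈ Ω,
      |(f Y + τ / 2 * fnorm Y ^ 2) - (f Y' + τ / 2 * fnorm Y' ^ 2)|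
        ≤ (L + τ * R0) * fnorm (Y - Y') := by
    intro Y hY Y' hY'
    have h1 := hset.lipschitz Y hY Y' hY'
    have h2 : |fnorm Y - fnorm Y'| ≤ fnorm (Y - Y') := by
      rw [abs_le]
      constructor
      · have h := fnorm_sub_fnorm_le Y' Y
        rw [show Y' - Y = -(Y - Y') from (neg_sub _ _).symm, fnorm_neg] at h
        linarith
      · linarith [fnorm_sub_fnorm_le Y Y']
    have h3 : |fnorm Y ^ 2 - fnorm Y' ^ 2| ≤ fnorm (Y - Y') * (2 * R0) := by
      have hfY := hR0 Y hY
      have hfY' := hR0 Y' hY'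
      have he : fnorm Y ^ 2 - fnorm Y' ^ 2 = (fnorm Y - fnorm Y') * (fnorm Y + fnorm Y') := by
        ring
      rw [he, abs_mul]
      have habs2 : |fnorm Y + fnorm Y'| ≤ 2 * R0 := by
        rw [abs_of_nonneg (by linarith [fnorm_nonneg Y, fnorm_nonneg Y'])]
        linarith
      exact mul_le_mul h2 habs2 (abs_nonneg _) (fnorm_nonneg _)
    calc |(f Y + τ / 2 * fnorm Y ^ 2) - (f Y' + τ / 2 * fnorm Y' ^ 2)|
        ≤ |f Y - f Y'| + |τ / 2 * (fnorm Y ^ 2 - fnorm Y' ^ 2)| := by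
          rw [show (f Y + τ / 2 * fnorm Y ^ 2) - (f Y' + τ / 2 * fnorm Y' ^ 2)
            = (f Y - f Y') + τ / 2 * (fnorm Y ^ 2 - fnorm Y' ^ 2) from by ring]
          exact abs_add_le _ _
      _ = |f Y - f Y'| + τ / 2 * |fnorm Y ^ 2 - fnorm Y' ^ 2| := by
          rw [abs_mul, abs_of_nonneg (by linarith : (0:ℝ) ≤ τ / 2)]
      _ ≤ L * fnorm (Y - Y') + τ / 2 * (fnorm (Y - Y') * (2 * R0)) := by
          have := mul_le_mul_of_nonneg_left h3 (by linarith : (0:ℝ) ≤ τ / 2)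
          linarith
      _ = (L + τ * R0) * fnorm (Y - Y') := by ring
  have hf : ∀ x : (⟨tangentSub X, tangentφ τ X⟩ : Mat n p →ₗ.[ℝ] ℝ).domain,
      (⟨tangentSub X, tangentφ τ X⟩ : Mat n p →ₗ.[ℝ] ℝ) x
        ≤ Nfun (fun Z => f Z + τ / 2 * fnorm Z ^ 2) X δ x := by
    rintro ⟨ξ, hm⟩
    exact tangent_dom hpart hl hset hlam0 hX hminX hδ hball hGlip hm
  obtain ⟨g, hg_ext, hg_le⟩ := exists_extension_of_le_sublinear
    (⟨tangentSub X, tangentφ τ X⟩ : Mat n p →ₗ.[ℝ] ℝ)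
    (Nfun (fun Z => f Z + τ / 2 * fnorm Z ^ 2) X δ)
    (fun c hc x => Nfun_smul hGconv hGlip hXΩ hδ hball hc x)
    (fun x y => Nfun_add hGconv hGlip hXΩ hδ hball x y) hf
  obtain ⟨w0, hw0def⟩ : ∃ w0 : Mat n p,
      w0 = Matrix.of fun i j => g (Matrix.single i j 1) := ⟨_, rfl⟩
  have hw0 : ∀ ζ : Mat n p, fip w0 ζ = g ζ := by
    intro ζ
    have hg_sum : g ζ = ∑ i : Fin n, ∑ j : Fin p, ζ i j * w0 i j := by
      conv_lhs => rw [show ζ = ∑ i : Fin n, ∑ j : Fin p, Matrix.single i j (ζ i j) from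
        Matrix.matrix_eq_sum_single ζ]
      rw [map_sum]
      apply Finset.sum_congr rfl
      intro i _
      rw [map_sum]
      apply Finset.sum_congr rfl
      intro j _
      have he : Matrix.single i j (ζ i j) = ζ i j • Matrix.single i j 1 := by
        rw [Matrix.smul_single, smul_eq_mul, mul_one]
      rw [he, _root_.map_smul, smul_eq_mul]
      have hwij : w0 i j = g (Matrix.single i j 1) := by rw [hw0def]; rfl
      rw [hwij]
    rw [fip_eq_sum, hg_sum, Finset.sum_comm]
    apply Finset.sum_congr rfl
    intro i _
    apply Finset.sum_congr rfl
    intro j _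
    ring
  refine ⟨w0 - τ • X, ?_, ?_⟩
  · -- subgradient property
    intro Y hYΩ
    have ht1 : X + (1 : ℝ) • (Y - X) ∈ Ω := by
      rw [one_smul, add_sub_cancel]
      exact hYΩ
    have hNle : Nfun (fun Z => f Z + τ / 2 * fnorm Z ^ 2) X δ (Y - X)
        ≤ qdq (fun Z => f Z + τ / 2 * fnorm Z ^ 2) X (Y - X) 1 :=
      Nfun_le_of_mem hGconv hGlip hXΩ hδ hball one_pos ht1
    have hq1 : qdq (fun Z => f Z + τ / 2 * fnorm Z ^ 2) X (Y - X) 1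
        = (f Y + τ / 2 * fnorm Y ^ 2) - (f X + τ / 2 * fnorm X ^ 2) := by
      unfold qdq
      rw [one_smul, add_sub_cancel, div_one]
    have hgle := hg_le (Y - X)
    have hfw0 : fip w0 (Y - X) ≤ (f Y + τ / 2 * fnorm Y ^ 2) - (f X + τ / 2 * fnorm X ^ 2) := by
      rw [hw0]
      rw [hq1] at hNle
      linarith
    have hid : fnorm Y ^ 2 = fnorm X ^ 2 + 2 * fip X (Y - X) + fnorm (Y - X) ^ 2 := by
      rw [fnorm_sq, fnorm_sq, fnorm_sq]
      have hYe : Y = X + (Y - X) := by abel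
      conv_lhs => rw [hYe]
      rw [fip_add_left, fip_add_right, fip_add_right, fip_comm (Y - X) X]
      ring
    have hfw : fip (w0 - τ • X) (Y - X) = fip w0 (Y - X) - τ * fip X (Y - X) := by
      rw [fip_sub_left, fip_smul_left]
    have hid2 : τ / 2 * fnorm Y ^ 2 = τ / 2 * fnorm X ^ 2 + τ * fip X (Y - X)
        + τ / 2 * fnorm (Y - X) ^ 2 := by
      rw [hid]
      ring
    show f Y ≥ f X + fip (w0 - τ • X) (Y - X) - τ / 2 * fnorm (Y - X) ^ 2
    linarith [hfw0, hid2, hfw]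
  · -- stationarity
    have htanzero : ∀ ξ : Mat n p, Xᵀ * ξ + ξᵀ * X = 0 → fip (w0 - τ • X) ξ = 0 := by
      intro ξ hξm
      have h1 : g ξ = τ * fip X ξ := by
        have h2 := hg_ext ⟨ξ, hξm⟩
        exact h2
      rw [fip_sub_left, fip_smul_left, hw0, h1]
      ring
    have hP : (symPart (Xᵀ * (w0 - τ • X)))ᵀ = symPart (Xᵀ * (w0 - τ • X)) :=
      symPart_transpose _
    have hmemT : Xᵀ * ptan X (w0 - τ • X) + (ptan X (w0 - τ • X))ᵀ * X = 0 := by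
      show Xᵀ * ((w0 - τ • X) - X * symPart (Xᵀ * (w0 - τ • X)))
        + ((w0 - τ • X) - X * symPart (Xᵀ * (w0 - τ • X)))ᵀ * X = 0
      rw [Matrix.mul_sub, Matrix.transpose_sub, Matrix.sub_mul, Matrix.transpose_mul, hP,
        ← Matrix.mul_assoc, hXs, Matrix.one_mul, Matrix.mul_assoc, hXs, Matrix.mul_one]
      unfold symPart
      rw [Matrix.transpose_mul, Matrix.transpose_transpose]
      module
    have hz := htanzero (ptan X (w0 - τ • X)) hmemT
    have hsplit : fip (w0 - τ • X) (ptan X (w0 - τ • X))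
        = fip (ptan X (w0 - τ • X)) (ptan X (w0 - τ • X))
          + fip (X * symPart (Xᵀ * (w0 - τ • X))) (ptan X (w0 - τ • X)) := by
      have hw' : w0 - τ • X = ptan X (w0 - τ • X) + X * symPart (Xᵀ * (w0 - τ • X)) := by
        unfold ptan
        abel
      have h := fip_add_left (ptan X (w0 - τ • X)) (X * symPart (Xᵀ * (w0 - τ • X)))
        (ptan X (w0 - τ • X))
      rw [← hw'] at h
      exact h
    have hskew : (Xᵀ * ptan X (w0 - τ • X))ᵀ = -(Xᵀ * ptan X (w0 - τ • X)) := by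
      rw [Matrix.transpose_mul, Matrix.transpose_transpose]
      exact eq_neg_of_add_eq_zero_right hmemT
    have hzero2 : fip (X * symPart (Xᵀ * (w0 - τ • X))) (ptan X (w0 - τ • X)) = 0 := by
      rw [fip_matmul]
      exact fip_sym_skew (symPart_transpose _) hskew
    have hfin : fip (ptan X (w0 - τ • X)) (ptan X (w0 - τ • X)) = 0 := by
      rw [hsplit] at hz
      linarith [hzero2]
    have hzn : fnorm (ptan X (w0 - τ • X)) = 0 := by
      unfold fnorm
      rw [hfin, Real.sqrt_zero]
    exact fnorm_eq_zero_iff.mp hzn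



/-- Proposition 4.6(b): vanishing of the surrogate stationarity
measure characterizes stationary points. -/
theorem surrogate_stationarity_measure_zero_iff
    (n p ℓ : ℕ) (hp : 1 ≤ p) (hpn : p ≤ n) (hl : 2 ≤ ℓ)
    (C : Fin ℓ → Finset (Fin p)) (hpart : IsPartition C)
    (f : Mat n p → ℝ) (τ L : ℝ) (Ω : Set (Mat n p)) (hset : Setting n p f τ L Ω)
    (lam : ℝ) (hlam0 : 0 < lam)
    (hlam1 : lam < (ℓ : ℝ) / (2 * (τ + (2 * (ℓ : ℝ) - 1) * L)))
    (X : Mat n p) (hX : X ∈ Stiefel n p)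
    (Z : Mat n p) (hZ : Z ∈ Stiefel n p)
    (hmin : ∀ Y ∈ Stiefel n p, pobj C f lam X Z ≤ pobj C f lam X Y) :
    (1 / lam * Real.sqrt (anorm2 C X (Z - X)) = 0 ↔ X = Z) ∧
    (X = Z ↔ ∃ w ∈ subdiff Ω τ f X, ptan X w = 0) := by
  have hXs : Xᵀ * X = 1 := hX
  have hZs : Zᵀ * Z = 1 := hZ
  have h2ℓ : (2 : ℝ) ≤ (ℓ : ℝ) := by exact_mod_cast hl
  have hL := hset.L_pos
  have hτ := hset.tau_nonneg
  have hDpos : 0 < τ + (2 * (ℓ : ℝ) - 1) * L := by nlinarith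
  have hlam' : lam * (2 * (τ + (2 * (ℓ : ℝ) - 1) * L)) < (ℓ : ℝ) := by
    rw [← lt_div_iff₀ (by positivity)]
    exact hlam1
  have hcoef : 0 < (ℓ : ℝ) / (4 * lam) - (L + τ) / 2 := by
    rw [lt_sub_iff_add_lt, zero_add, lt_div_iff₀ (by positivity : (0:ℝ) < 4 * lam)]
    have hstep : 0 ≤ lam * L * (2 * (ℓ:ℝ) - 2) :=
      mul_nonneg (mul_nonneg hlam0.le hL.le) (by linarith)
    nlinarith
  -- the implication: stationary → X = Z
  have hkey : ∀ w ∈ subdiff Ω τ f X, ptan X w = 0 → X = Z := by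
    intro w hw hpt
    obtain ⟨δ, hδ, hball⟩ := exists_fnorm_ball hset.isOpen (hset.stiefel_subset hX)
    have hwL : fnorm w ≤ L := subdiff_fnorm_le hset.tau_nonneg hset.L_pos hset.lipschitz
      (hset.stiefel_subset hX) hδ hball hw
    have hS : w = X * symPart (Xᵀ * w) := by
      unfold ptan at hpt
      exact (sub_eq_zero.mp hpt)
    -- opaque names
    obtain ⟨S, hSdef⟩ : ∃ S, S = symPart (Xᵀ * w) := ⟨_, rfl⟩
    rw [← hSdef] at hS
    have hSt : Sᵀ = S := by rw [hSdef]; exact symPart_transpose _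
    have hSn : fnorm S ≤ L := by
      rw [hSdef]
      exact le_trans (fnorm_symPart_le _) (le_trans (fnorm_Xt_le hXs w) hwL)
    obtain ⟨d2, hd2def⟩ : ∃ d2, d2 = fip (Z - X) (Z - X) := ⟨_, rfl⟩
    have hd2 : 0 ≤ d2 := hd2def ▸ fip_self_nonneg _
    have hfip : -(L / 2) * d2 ≤ fip w (Z - X) := by
      conv_rhs => rw [hS]
      rw [fip_matmul]
      have hXZ : Xᵀ * (Z - X) = Xᵀ * Z - 1 := by rw [Matrix.mul_sub, hXs]
      rw [hXZ]
      have e1 : fip S (Xᵀ * Z) = fip S (symPart (Xᵀ * Z)) := by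
        unfold symPart
        rw [fip_smul_right, fip_add_right, fip_sym_transpose hSt]
        ring
      have e2 : fip S (Xᵀ * Z - 1) = fip S (symPart (Xᵀ * Z) - 1) := by
        rw [fip_sub_right, fip_sub_right, e1]
      rw [e2, stiefel_sym_diff hXs hZs, fip_smul_right]
      have hcs : |fip S ((Z - X)ᵀ * (Z - X))| ≤ L * d2 := by
        have h1 := fip_abs_le S ((Z - X)ᵀ * (Z - X))
        have h2 : fnorm ((Z - X)ᵀ * (Z - X)) ≤ fnorm (Z - X) * fnorm (Z - X) := by
          have := fnorm_mul_le (Z - X)ᵀ (Z - X)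
          rwa [fnorm_transpose] at this
        have h3 : fnorm (Z - X) * fnorm (Z - X) = d2 := by
          rw [hd2def, ← fnorm_sq]; ring
        have h4 : fnorm S * fnorm ((Z - X)ᵀ * (Z - X)) ≤ L * d2 := by
          apply mul_le_mul hSn (h2.trans_eq h3) (fnorm_nonneg _) hL.le
        linarith
      have := (abs_le.mp hcs).1
      linarith [(abs_le.mp hcs).2]
    have hZΩ := hset.stiefel_subset hZ
    have hsub := hw Z hZΩ
    rw [fnorm_sq, ← hd2def] at hsub
    have han := anorm2_ge hpart hl hXs (Z - X)
    rw [← hd2def] at han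
    have hmin' := hmin X hX
    unfold pobj at hmin'
    rw [sub_self, anorm2_zero hpart hl hXs, mul_zero, add_zero] at hmin'
    have hmul : 1 / (2 * lam) * ((ℓ : ℝ) / 2 * d2) ≤ 1 / (2 * lam) * anorm2 C X (Z - X) :=
      mul_le_mul_of_nonneg_left han (by positivity)
    have hflip : 1 / (2 * lam) * ((ℓ : ℝ) / 2 * d2) = (ℓ : ℝ) / (4 * lam) * d2 := by
      ring
    have hfinal : ((ℓ : ℝ) / (4 * lam) - (L + τ) / 2) * d2 ≤ 0 := by
      nlinarith
    have hzero : d2 = 0 := by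
      by_contra hne0
      have hpos : 0 < d2 := lt_of_le_of_ne hd2 (Ne.symm hne0)
      nlinarith [mul_pos hcoef hpos]
    have : fnorm (Z - X) = 0 := by
      unfold fnorm
      rw [← hd2def, hzero, Real.sqrt_zero]
    exact (sub_eq_zero.mp (fnorm_eq_zero_iff.mp this)).symm
  constructor
  · constructor
    · intro h
      have hne : (1 : ℝ) / lam ≠ 0 := by positivity
      have h1 : Real.sqrt (anorm2 C X (Z - X)) = 0 := by
        rcases mul_eq_zero.mp h with h' | h'
        · exact absurd h' hne
        · exact h'
      have h2 : anorm2 C X (Z - X) ≤ 0 := Real.sqrt_eq_zero'.mp h1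
      have han := anorm2_ge hpart hl hXs (Z - X)
      have hd2 : 0 ≤ fip (Z - X) (Z - X) := fip_self_nonneg _
      have hzero : fip (Z - X) (Z - X) = 0 := by nlinarith
      have : fnorm (Z - X) = 0 := by
        unfold fnorm; rw [hzero, Real.sqrt_zero]
      exact (sub_eq_zero.mp (fnorm_eq_zero_iff.mp this)).symm
    · intro h
      rw [← h, sub_self, anorm2_zero hpart hl hXs, Real.sqrt_zero, mul_zero]
  · constructor
    · intro h
      apply exists_stationary_of_min hpart hl hset hlam0 hX
      intro Y hY
      have := hmin Y hY
      rw [← h] at this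
      unfold pobj at this
      rw [sub_self, anorm2_zero hpart hl hXs, mul_zero, add_zero] at this
      exact this
    · rintro ⟨w, hw, hpt⟩
      exact hkey w hw hpt

end RSSM
end
end
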